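/- arXiv:2208.13216 — 8 statements merged into one kernel-verified Lean document; each statement's English description precedes it below -/
import Mathlib

section
/- Let G be a connected graph on n vertices with diameter 2. Then for i = 1,...,n-1, the i-th largest eigenvalue of the reciprocal distance Laplacian matrix RD^L(G) equals (n + μ_i(G))/2, where μ_1(G) ≥ ... ≥ μ_{n-1}(G) are the n-1 largest Laplacian eigenvalues of G. -/
open Matrix Polynomial

/-- The reciprocal distance (Harary) matrix of a graph: `(i,j)`-entry is `1/d(i,j)`
for `i ≠ j` and `0` on the diagonal. -/
noncomputable def RD {V : Type*} [Fintype V] [DecidableEq V] (G : SimpleGraph V) :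
    Matrix V V ℝ :=
  fun u v => if u = v then 0 else ((G.dist u v : ℝ))⁻¹

/-- The reciprocal distance degree of a vertex: `RTr(v) = ∑_{u ≠ v} 1/d(v,u)`. -/
noncomputable def RTr {V : Type*} [Fintype V] [DecidableEq V] (G : SimpleGraph V) (v : V) : ℝ :=
  ∑ u, RD G v u

/-- The reciprocal distance Laplacian matrix `RD^L(G) = RT(G) - RD(G)`. -/
noncomputable def RDL {V : Type*} [Fintype V] [DecidableEq V] (G : SimpleGraph V) :
    Matrix V V ℝ :=
  Matrix.diagonal (RTr G) - RD G

/-- `e : Fin n → ℝ` enumerates the eigenvalues of `M` in (weakly) decreasing order,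
with multiplicities, where the eigenvalues (with multiplicity) are the roots of the
characteristic polynomial. -/
def IsEigEnum {V : Type*} [Fintype V] [DecidableEq V] (M : Matrix V V ℝ)
    (e : Fin (Fintype.card V) → ℝ) : Prop :=
  Antitone e ∧ (↑(List.ofFn e) : Multiset ℝ) = M.charpoly.roots


/-! In diameter 2 every distance between distinct vertices is 1 or 2, so
`RD^L(G) = (n/2) I + (L(G) - J)/2`. Since `L(G) 𝟙 = 0`, the matrix determinant lemma gives
`t · χ_{L-J}(t) = (t + n) · χ_L(t)`: subtracting `J` moves the eigenvalue `0` of `𝟙` to `-n` and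
keeps the rest of the spectrum. Hence `n/2 :: spec RD^L(G) = 0 :: {(n + μ)/2 : μ ∈ spec L(G)}`.
As every `μ ≥ 0`, the extra `0` is the smallest eigenvalue of `RD^L(G)` and `n/2` comes from the
smallest Laplacian eigenvalue `0`, so the two sorted spectra agree in the first `n - 1` places. -/

namespace Matrix

variable {n K : Type*} [Fintype n] [DecidableEq n] [Field K]

theorem det_add_vecMulVec_of_mulVec_eq_smul {A : Matrix n n K} (hA : IsUnit A.det) {u : n → K}
    {c : K} (hc : c ≠ 0) (hu : A *ᵥ u = c • u) (v : n → K) :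
    (A + vecMulVec u v).det = A.det * (1 + c⁻¹ * (v ⬝ᵥ u)) := by
  have hinv : A⁻¹ *ᵥ u = c⁻¹ • u :=
    calc A⁻¹ *ᵥ u = A⁻¹ *ᵥ (c⁻¹ • (A *ᵥ u)) := by rw [hu, inv_smul_smul₀ hc]
      _ = c⁻¹ • u := by rw [mulVec_smul, mulVec_mulVec, nonsing_inv_mul A hA, one_mulVec]
  rw [vecMulVec_eq Unit, det_add_replicateCol_mul_replicateRow hA, Matrix.mul_assoc,
    ← replicateCol_mulVec, hinv, det_unique (n := Unit)]
  simp [replicateRow_mul_replicateCol_apply, mul_comm]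

theorem X_mul_charpoly_sub_vecMulVec [Infinite K] {L : Matrix n n K} {u : n → K}
    (hu : L *ᵥ u = 0) (v : n → K) :
    X * (L - vecMulVec u v).charpoly = (X + C (v ⬝ᵥ u)) * L.charpoly := by
  have hp : X * L.charpoly ≠ 0 := mul_ne_zero X_ne_zero L.charpoly_monic.ne_zero
  refine eq_of_infinite_eval_eq _ _ ((finite_setOfPred_isRoot hp).infinite_compl.mono ?_)
  intro t ht
  simp only [Set.mem_compl_iff, Set.mem_ofPred_eq, IsRoot, eval_mul, eval_X, mul_eq_zero,
    not_or] at ht ⊢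
  obtain ⟨ht0, hLt⟩ := ht
  rw [eval_charpoly] at hLt
  have hAu : (scalar n t - L) *ᵥ u = t • u := by
    rw [sub_mulVec, hu, sub_zero]
    ext i
    simp [mulVec_diagonal]
  rw [eval_charpoly, eval_charpoly, sub_sub_eq_add_sub, add_sub_right_comm,
    det_add_vecMulVec_of_mulVec_eq_smul (isUnit_iff_ne_zero.mpr hLt) ht0 hAu]
  simp only [eval_add, eval_X, eval_C]
  field_simp

theorem charpoly_scalar_add_smul [Infinite K] (a : K) {b : K} (hb : b ≠ 0) (M : Matrix n n K) :
    (scalar n a + b • M).charpoly =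
      C (b ^ Fintype.card n) * M.charpoly.comp (C b⁻¹ * X + C (-(b⁻¹ * a))) := by
  refine Polynomial.funext fun t => ?_
  rw [eval_mul, eval_C, eval_comp, eval_charpoly, eval_charpoly, ← det_smul]
  congr 1
  ext i j
  by_cases hij : i = j
  · subst hij
    simp only [scalar_apply, sub_apply, diagonal_apply_eq, add_apply, smul_apply, smul_eq_mul,
      map_neg, map_mul, eval_add, eval_mul, eval_C, eval_X, eval_neg]
    field_simp
    ring
  · simp [hij]

theorem roots_charpoly_scalar_add_smul [Infinite K] (a : K) {b : K} (hb : b ≠ 0)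
    (M : Matrix n n K) :
    (scalar n a + b • M).charpoly.roots = M.charpoly.roots.map (fun μ => a + b * μ) := by
  rw [charpoly_scalar_add_smul a hb, roots_C_mul _ (pow_ne_zero _ hb),
    roots_comp_C_mul_X_add_C _ _ _ (isUnit_iff_ne_zero.mpr (inv_ne_zero hb))]
  refine Multiset.map_congr rfl fun μ _ => ?_
  simp only [Ring.inverse_eq_inv', inv_inv, sub_neg_eq_add]
  field_simp
  ring

end Matrix

theorem Antitone.eq_of_coe_ofFn_eq {α : Type*} [LinearOrder α] {n : ℕ} {f g : Fin n → α}
    (hf : Antitone f) (hg : Antitone g)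
    (h : (List.ofFn f : Multiset α) = (List.ofFn g : Multiset α)) : f = g :=
  List.ofFn_injective <| (Multiset.coe_eq_coe.mp h).eq_of_sortedGE
    (List.sortedGE_ofFn_iff.mpr hf) (List.sortedGE_ofFn_iff.mpr hg)

theorem Multiset.coe_ofFn_eq_cons_last {α : Type*} {k : ℕ} (g : Fin (k + 1) → α) :
    (List.ofFn g : Multiset α) =
      g (Fin.last k) ::ₘ (List.ofFn fun i => g i.castSucc : Multiset α) := by
  rw [List.ofFn_succ', List.concat_eq_append, ← Multiset.coe_add, add_comm,
    Multiset.coe_singleton, Multiset.singleton_add]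

theorem Fin.antitone_snoc {α : Type*} [Preorder α] {k : ℕ} {g : Fin k → α} {a : α}
    (hg : Antitone g) (ha : ∀ i, a ≤ g i) : Antitone (Fin.snoc g a : Fin (k + 1) → α) := by
  intro i j hij
  induction j using Fin.lastCases with
  | last =>
    induction i using Fin.lastCases with
    | last => exact le_rfl
    | cast i => simpa using ha i
  | cast j =>
    obtain ⟨i, rfl⟩ := Fin.exists_castSucc_eq.mpr
      (ne_of_lt (lt_of_le_of_lt hij (Fin.castSucc_lt_last j)))
    simpa using hg (Fin.castSucc_le_castSucc_iff.mp hij)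

theorem eq_snoc_of_cons_coe_ofFn_eq {k : ℕ} {c : ℝ} (hc : 0 < c) {e m : Fin (k + 1) → ℝ}
    (he : Antitone e) (hm : Antitone m) (hm0 : ∀ i, 0 ≤ m i)
    (h : (c / 2) ::ₘ (List.ofFn e : Multiset ℝ) =
      0 ::ₘ (List.ofFn m : Multiset ℝ).map (fun μ => (c + μ) / 2)) :
    e = Fin.snoc (fun i => (c + m i.castSucc) / 2) 0 := by
  have hlast : m (Fin.last k) = 0 := by
    have hmem := h ▸ Multiset.mem_cons_self (c / 2) (List.ofFn e : Multiset ℝ)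
    rw [Multiset.mem_cons, or_iff_right (by positivity)] at hmem
    obtain ⟨μ, hμ, hcμ⟩ := Multiset.mem_map.mp hmem
    obtain ⟨j, rfl⟩ := List.mem_ofFn.mp (Multiset.mem_coe.mp hμ)
    exact le_antisymm (le_of_le_of_eq (hm (Fin.le_last j)) (by linarith)) (hm0 _)
  refine he.eq_of_coe_ofFn_eq (Fin.antitone_snoc (fun i j hij => ?_) fun i => ?_) ?_
  · have := hm (Fin.castSucc_le_castSucc_iff.mpr hij); linarith
  · have := hm0 i.castSucc; linarith
  · rw [Multiset.coe_ofFn_eq_cons_last m, hlast, Multiset.map_cons, add_zero,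
      Multiset.cons_swap, Multiset.cons_inj_right] at h
    rw [h, Multiset.coe_ofFn_eq_cons_last, Fin.snoc_last, Multiset.map_coe, List.map_ofFn]
    simp [Function.comp_def]

theorem apply_eq_of_cons_coe_ofFn_eq {n : ℕ} {c : ℝ} (hc : 0 < c) {e m : Fin n → ℝ}
    (he : Antitone e) (hm : Antitone m) (hm0 : ∀ i, 0 ≤ m i)
    (h : (c / 2) ::ₘ (List.ofFn e : Multiset ℝ) =
      0 ::ₘ (List.ofFn m : Multiset ℝ).map (fun μ => (c + μ) / 2))
    (i : Fin n) (hi : (i : ℕ) < n - 1) : e i = (c + m i) / 2 := by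
  obtain ⟨k, rfl⟩ : ∃ k, n = k + 1 := ⟨n - 1, by omega⟩
  obtain ⟨j, rfl⟩ : ∃ j : Fin k, j.castSucc = i :=
    Fin.exists_castSucc_eq.mpr (Fin.ne_of_lt (by simpa [Fin.lt_def] using hi))
  rw [eq_snoc_of_cons_coe_ofFn_eq hc he hm hm0 h, Fin.snoc_castSucc]

section DiameterTwo

variable {V : Type*} {G : SimpleGraph V}

theorem SimpleGraph.dist_eq_two_of_diam_eq_two (hd : G.diam = 2) {u v : V} (huv : u ≠ v)
    (hadj : ¬G.Adj u v) : G.dist u v = 2 := by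
  have hfin : G.ediam ≠ ⊤ := G.ediam_ne_top_of_diam_ne_zero (by omega)
  have hle : G.dist u v ≤ 2 := hd ▸ G.dist_le_diam hfin
  have hpos : 0 < G.dist u v := (G.preconnected_of_ediam_ne_top hfin u v).pos_dist_of_ne huv
  have hne : G.dist u v ≠ 1 := fun h => hadj (SimpleGraph.dist_eq_one_iff_adj.mp h)
  omega

variable [Fintype V] [DecidableEq V] [DecidableRel G.Adj]

theorem RD_eq_of_diam_eq_two (hd : G.diam = 2) :
    RD G = (2 : ℝ)⁻¹ • (G.adjMatrix ℝ + of (fun _ _ => 1) - 1) := by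
  ext u v
  by_cases huv : u = v
  · subst huv; simp [RD]
  by_cases hadj : G.Adj u v
  · have hdist : G.dist u v = 1 := SimpleGraph.dist_eq_one_iff_adj.mpr hadj
    norm_num [RD, huv, hadj, hdist]
  · simp [RD, huv, hadj, G.dist_eq_two_of_diam_eq_two hd huv hadj]

theorem RTr_eq_of_diam_eq_two (hd : G.diam = 2) (v : V) :
    RTr G v = ((Fintype.card V : ℝ) - 1 + G.degree v) / 2 := by
  simp only [RTr, RD_eq_of_diam_eq_two hd, Matrix.smul_apply, Matrix.sub_apply, Matrix.add_apply,
    SimpleGraph.adjMatrix_apply, of_apply, Matrix.one_apply, smul_eq_mul, ← Finset.mul_sum,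
    Finset.sum_sub_distrib, Finset.sum_add_distrib, Finset.sum_boole, Finset.sum_const,
    Finset.card_univ, nsmul_eq_mul, mul_one, Finset.filter_eq, Finset.mem_univ, if_true,
    Finset.card_singleton, ← SimpleGraph.card_neighborFinset_eq_degree,
    SimpleGraph.neighborFinset_eq_filter]
  ring

theorem RDL_eq_of_diam_eq_two (hd : G.diam = 2) :
    RDL G = scalar V ((Fintype.card V : ℝ) / 2) +
      (2 : ℝ)⁻¹ • (G.lapMatrix ℝ - vecMulVec (fun _ => 1) (fun _ => 1)) := by
  ext u v
  by_cases huv : u = v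
  · subst huv
    simp only [RDL, RD_eq_of_diam_eq_two hd, Matrix.sub_apply, diagonal_apply_eq,
      RTr_eq_of_diam_eq_two hd, Matrix.smul_apply, Matrix.add_apply, SimpleGraph.adjMatrix_apply,
      SimpleGraph.irrefl, ↓reduceIte, of_apply, zero_add, one_apply_eq, sub_self, smul_eq_mul,
      mul_zero, sub_zero, scalar_apply, SimpleGraph.lapMatrix, SimpleGraph.degMatrix,
      vecMulVec_apply, mul_one]
    ring
  · simp only [RDL, RD_eq_of_diam_eq_two hd, Matrix.sub_apply, ne_eq, huv, not_false_eq_true,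
      diagonal_apply_ne, Matrix.smul_apply, Matrix.add_apply, SimpleGraph.adjMatrix_apply, of_apply,
      one_apply_ne, sub_zero, smul_eq_mul, zero_sub, scalar_apply, SimpleGraph.lapMatrix,
      SimpleGraph.degMatrix, vecMulVec_apply, mul_one, zero_add]
    ring

theorem SimpleGraph.nonneg_of_mem_roots_charpoly_lapMatrix {μ : ℝ}
    (hμ : μ ∈ (G.lapMatrix ℝ).charpoly.roots) : 0 ≤ μ := by
  have hL := G.posSemidef_lapMatrix ℝ
  rw [hL.isHermitian.roots_charpoly_eq_eigenvalues] at hμ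
  obtain ⟨i, -, rfl⟩ := Multiset.mem_map.mp hμ
  exact hL.eigenvalues_nonneg i

theorem cons_roots_charpoly_RDL_of_diam_eq_two (hd : G.diam = 2) :
    ((Fintype.card V : ℝ) / 2) ::ₘ (RDL G).charpoly.roots =
      0 ::ₘ (G.lapMatrix ℝ).charpoly.roots.map (fun μ => ((Fintype.card V : ℝ) + μ) / 2) := by
  set n : ℝ := (Fintype.card V : ℝ)
  set L := G.lapMatrix ℝ
  set J : Matrix V V ℝ := vecMulVec (fun _ => 1) (fun _ => 1)
  have hshift : 0 ::ₘ (L - J).charpoly.roots = -n ::ₘ L.charpoly.roots := by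
    have h := congrArg roots <| Matrix.X_mul_charpoly_sub_vecMulVec
      (G.lapMatrix_mulVec_const_eq_zero (R := ℝ)) (fun _ => 1)
    rw [roots_mul (mul_ne_zero X_ne_zero (charpoly_monic _).ne_zero),
      roots_mul (mul_ne_zero (X_add_C_ne_zero _) (charpoly_monic _).ne_zero), roots_X,
      roots_X_add_C, Multiset.singleton_add, Multiset.singleton_add] at h
    simpa [dotProduct, n] using h
  rw [RDL_eq_of_diam_eq_two hd, Matrix.roots_charpoly_scalar_add_smul _ (by norm_num)]
  calc n / 2 ::ₘ (L - J).charpoly.roots.map (fun μ => n / 2 + 2⁻¹ * μ)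
      = (0 ::ₘ (L - J).charpoly.roots).map (fun μ => n / 2 + 2⁻¹ * μ) := by simp
    _ = (-n ::ₘ L.charpoly.roots).map (fun μ => n / 2 + 2⁻¹ * μ) := by rw [hshift]
    _ = 0 ::ₘ L.charpoly.roots.map (fun μ => (n + μ) / 2) := by
      rw [Multiset.map_cons]
      congr 1
      · ring
      · exact Multiset.map_congr rfl fun μ _ => by ring

end DiameterTwo

theorem stmt0_general {V : Type*} [Fintype V] [DecidableEq V] (G : SimpleGraph V) [DecidableRel G.Adj]
    (hd : G.diam = 2)
    (e m : Fin (Fintype.card V) → ℝ)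
    (he : IsEigEnum (RDL G) e) (hm : IsEigEnum (G.lapMatrix ℝ) m) :
    ∀ i : Fin (Fintype.card V), (i : ℕ) < Fintype.card V - 1 →
      e i = ((Fintype.card V : ℝ) + m i) / 2 := by
  intro i
  have hm0 (j : Fin (Fintype.card V)) : 0 ≤ m j :=
    G.nonneg_of_mem_roots_charpoly_lapMatrix <|
      hm.2 ▸ Multiset.mem_coe.mpr (List.mem_ofFn.mpr ⟨j, rfl⟩)
  refine apply_eq_of_cons_coe_ofFn_eq (by exact_mod_cast i.pos) he.1 hm.1 hm0 ?_ i
  rw [he.2, hm.2]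
  exact cons_roots_charpoly_RDL_of_diam_eq_two hd

theorem stmt0 {V : Type*} [Fintype V] [DecidableEq V] (G : SimpleGraph V) [DecidableRel G.Adj]
    (hc : G.Connected) (hd : G.diam = 2)
    (e m : Fin (Fintype.card V) → ℝ)
    (he : IsEigEnum (RDL G) e) (hm : IsEigEnum (G.lapMatrix ℝ) m) :
    ∀ i : Fin (Fintype.card V), (i : ℕ) < Fintype.card V - 1 →
      e i = ((Fintype.card V : ℝ) + m i) / 2 :=
  stmt0_general G hd e m he hm
end

section
/- Let G be a connected graph on n vertices and G' = G + e the graph obtained by adding an edge e ∉ E(G). Then λ_i(RD^L(G')) ≥ λ_i(RD^L(G)) for all i = 1,...,n, where eigenvalues are ordered in decreasing order. -/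
open Matrix Polynomial

/-!
Adding an edge can only shorten distances, so every entry `1 / d` of `RD` grows (a pair that is
unreachable in `G` contributes `0`). Hence `RD^L(G') - RD^L(G)` is the Laplacian of the symmetric
nonnegative weights `RD(G') - RD(G)`; it is diagonally dominant, so positive semidefinite by
Gershgorin. Weyl monotonicity then compares the sorted spectra: some nonzero `x` lies both in the
span of the top `i + 1` eigenvectors of `RD^L(G)` and of the bottom `n - i` eigenvectors of
`RD^L(G')`, and `λ_i(G) ‖x‖² ≤ ⟪RD^L(G) x, x⟫ ≤ ⟪RD^L(G') x, x⟫ ≤ λ_i(G') ‖x‖²`.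
-/

open Module

theorem Module.Basis.exists_ne_zero_repr_eq_zero {K V : Type*} [Field K] [AddCommGroup V]
    [Module K V] {n : ℕ} (b b' : Basis (Fin n) K V) (i : Fin n) :
    ∃ x ≠ 0, (∀ k, i < k → b.repr x k = 0) ∧ ∀ k, k < i → b'.repr x k = 0 := by
  have : FiniteDimensional K V := b.finiteDimensional_of_finite
  let L : V →ₗ[K] ({k : Fin n // k ≠ i} → K) :=
    LinearMap.pi fun k => if i < k.1 then b.coord k else b'.coord k
  have hlt : finrank K ({k : Fin n // k ≠ i} → K) < finrank K V := by
    rw [Module.finrank_fintype_fun_eq_card, finrank_eq_card_basis b, Fintype.card_subtype_compl,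
      Fintype.card_fin, Fintype.card_subtype_eq]
    have := i.pos
    -- `n - 1` linear conditions in dimension `n`
    omega
  obtain ⟨x, hx, hx0⟩ := Submodule.exists_mem_ne_zero_of_ne_bot (L.ker_ne_bot_of_finrank_lt hlt)
  refine ⟨x, hx0, fun k hk => ?_, fun k hk => ?_⟩
  · simpa [L, hk] using congrFun (LinearMap.mem_ker.mp hx) ⟨k, hk.ne'⟩
  · simpa [L, not_lt_of_gt hk] using congrFun (LinearMap.mem_ker.mp hx) ⟨k, hk.ne⟩

namespace LinearMap.IsSymmetric

variable {𝕜 E : Type*} [RCLike 𝕜] [NormedAddCommGroup E] [InnerProductSpace 𝕜 E]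
  [FiniteDimensional 𝕜 E] {n : ℕ} {T : E →ₗ[𝕜] E} (hT : T.IsSymmetric) (hn : finrank 𝕜 E = n)

theorem re_inner_apply_self_eq_sum (x : E) :
    RCLike.re (inner 𝕜 (T x) x) =
      ∑ k, hT.eigenvalues hn k * ‖(hT.eigenvectorBasis hn).repr x k‖ ^ 2 := by
  rw [← (hT.eigenvectorBasis hn).repr.inner_map_map, PiLp.inner_apply, map_sum]
  refine Finset.sum_congr rfl fun k _ => ?_
  rw [eigenvectorBasis_apply_self_apply, ← smul_eq_mul, inner_smul_left,
    inner_self_eq_norm_sq_to_K, RCLike.conj_ofReal]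
  norm_cast

theorem eigenvalues_mul_norm_sq_le {i : Fin n} {x : E}
    (hx : ∀ k, i < k → (hT.eigenvectorBasis hn).repr x k = 0) :
    hT.eigenvalues hn i * ‖x‖ ^ 2 ≤ RCLike.re (inner 𝕜 (T x) x) := by
  rw [hT.re_inner_apply_self_eq_sum hn, ← (hT.eigenvectorBasis hn).repr.norm_map x,
    EuclideanSpace.norm_sq_eq, Finset.mul_sum]
  refine Finset.sum_le_sum fun k _ => ?_
  rcases lt_or_ge i k with hik | hki
  · simp [hx k hik]
  · exact mul_le_mul_of_nonneg_right (hT.eigenvalues_antitone hn hki) (sq_nonneg _)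

theorem re_inner_apply_self_le_eigenvalues_mul {i : Fin n} {x : E}
    (hx : ∀ k, k < i → (hT.eigenvectorBasis hn).repr x k = 0) :
    RCLike.re (inner 𝕜 (T x) x) ≤ hT.eigenvalues hn i * ‖x‖ ^ 2 := by
  rw [hT.re_inner_apply_self_eq_sum hn, ← (hT.eigenvectorBasis hn).repr.norm_map x,
    EuclideanSpace.norm_sq_eq, Finset.mul_sum]
  refine Finset.sum_le_sum fun k _ => ?_
  rcases lt_or_ge k i with hki | hik
  · simp [hx k hki]
  · exact mul_le_mul_of_nonneg_right (hT.eigenvalues_antitone hn hik) (sq_nonneg _)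

theorem eigenvalues_le_eigenvalues_of_le {S : E →ₗ[𝕜] E} (hS : S.IsSymmetric) (hTS : T ≤ S)
    (i : Fin n) : hT.eigenvalues hn i ≤ hS.eigenvalues hn i := by
  obtain ⟨x, hx0, hxT, hxS⟩ := Module.Basis.exists_ne_zero_repr_eq_zero
    (hT.eigenvectorBasis hn).toBasis (hS.eigenvectorBasis hn).toBasis i
  simp only [OrthonormalBasis.coe_toBasis_repr_apply] at hxT hxS
  have hTS_x : RCLike.re (inner 𝕜 (T x) x) ≤ RCLike.re (inner 𝕜 (S x) x) := by
    have := hTS.re_inner_nonneg_left x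
    rwa [LinearMap.sub_apply, inner_sub_left, map_sub, sub_nonneg] at this
  have hx : 0 < ‖x‖ ^ 2 := by positivity
  refine le_of_mul_le_mul_right ?_ hx
  calc hT.eigenvalues hn i * ‖x‖ ^ 2 ≤ RCLike.re (inner 𝕜 (T x) x) :=
        hT.eigenvalues_mul_norm_sq_le hn hxT
    _ ≤ RCLike.re (inner 𝕜 (S x) x) := hTS_x
    _ ≤ hS.eigenvalues hn i * ‖x‖ ^ 2 := hS.re_inner_apply_self_le_eigenvalues_mul hn hxS

end LinearMap.IsSymmetric

namespace Matrix

open scoped ComplexOrder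

variable {𝕜 ι : Type*} [RCLike 𝕜] [Fintype ι] [DecidableEq ι]

theorem IsHermitian.posSemidef_of_sum_norm_le_re_diag {A : Matrix ι ι 𝕜} (hA : A.IsHermitian)
    (hdom : ∀ k, ∑ j ∈ Finset.univ.erase k, ‖A k j‖ ≤ RCLike.re (A k k)) : A.PosSemidef := by
  refine hA.posSemidef_iff_eigenvalues_nonneg.mpr fun i => ?_
  rw [Pi.zero_apply]
  have hμ : Module.End.HasEigenvalue (toLin' A) (hA.eigenvalues i : 𝕜) := by
    refine Module.End.hasEigenvalue_of_hasEigenvector (x := ⇑(hA.eigenvectorBasis i)) ⟨?_, ?_⟩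
    · rw [Module.End.mem_eigenspace_iff, toLin'_apply, hA.mulVec_eigenvectorBasis,
        RCLike.real_smul_eq_coe_smul (K := 𝕜)]
    · simpa using (hA.eigenvectorBasis.orthonormal.ne_zero i)
  obtain ⟨k, hk⟩ := eigenvalue_mem_ball hμ
  rw [Metric.mem_closedBall, dist_eq_norm] at hk
  have hre := (abs_le.mp (RCLike.abs_re_le_norm ((hA.eigenvalues i : 𝕜) - A k k))).1
  rw [map_sub, RCLike.ofReal_re] at hre
  linarith [hdom k]

theorem IsHermitian.eigenvalues₀_le_eigenvalues₀ {A B : Matrix ι ι 𝕜} (hA : A.IsHermitian)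
    (hB : B.IsHermitian) (hAB : (B - A).PosSemidef) (i : Fin (Fintype.card ι)) :
    hA.eigenvalues₀ i ≤ hB.eigenvalues₀ i :=
  LinearMap.IsSymmetric.eigenvalues_le_eigenvalues_of_le _ _ _
    (by rwa [LinearMap.le_def, ← map_sub, Matrix.isPositive_toEuclideanLin_iff]) i

theorem posSemidef_diagonal_sum_sub {W : Matrix ι ι ℝ} (hW : W.IsSymm)
    (hnonneg : ∀ i j, i ≠ j → 0 ≤ W i j) :
    (diagonal (fun i => ∑ j, W i j) - W).PosSemidef := by
  refine IsHermitian.posSemidef_of_sum_norm_le_re_diag ?_ fun k => ?_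
  · simpa [isHermitian_iff_isSymm] using (isSymm_diagonal (fun i => ∑ j, W i j)).sub hW
  · refine le_of_eq ?_
    calc ∑ j ∈ Finset.univ.erase k, ‖(diagonal (fun i => ∑ j, W i j) - W) k j‖
        = ∑ j ∈ Finset.univ.erase k, W k j := by
          refine Finset.sum_congr rfl fun j hj => ?_
          have hjk : k ≠ j := (Finset.ne_of_mem_erase hj).symm
          rw [sub_apply, diagonal_apply_ne _ hjk, zero_sub, norm_neg,
            Real.norm_of_nonneg (hnonneg k j hjk)]
      _ = RCLike.re ((diagonal (fun i => ∑ j, W i j) - W) k k) := by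
          rw [sub_apply, diagonal_apply_eq, RCLike.re_to_real,
            ← Finset.sum_erase_add _ _ (Finset.mem_univ k), add_sub_cancel_right]

end Matrix

theorem IsEigEnum.eq_eigenvalues₀ {V : Type*} [Fintype V] [DecidableEq V] {M : Matrix V V ℝ}
    {e : Fin (Fintype.card V) → ℝ} (he : IsEigEnum M e) (hM : M.IsHermitian) :
    e = hM.eigenvalues₀ := by
  rw [← List.ofFn_inj, ← hM.sort_roots_charpoly_eq_eigenvalues₀, ← he.2]
  simp only [RCLike.re_to_real, Multiset.map_id', Multiset.coe_sort]
  refine (List.mergeSort_of_pairwise ?_).symm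
  simpa only [decide_eq_true_eq, ← List.sortedGE_iff_pairwise] using he.1.sortedGE_ofFn

section ReciprocalDistance

variable {V : Type*} [Fintype V] [DecidableEq V]

theorem RD_isSymm (G : SimpleGraph V) : (RD G).IsSymm := by
  ext i j
  simp only [RD, transpose_apply, eq_comm (a := j), G.dist_comm]

theorem RDL_isHermitian (G : SimpleGraph V) : (RDL G).IsHermitian :=
  isHermitian_iff_isSymm.mpr ((isSymm_diagonal _).sub (RD_isSymm G))

theorem RD_apply_le_of_le {G G' : SimpleGraph V} (h : G ≤ G') (i j : V) :
    RD G i j ≤ RD G' i j := by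
  unfold RD
  split_ifs with hij
  · rfl
  by_cases hr : G.Reachable i j
  · have hpos : (0 : ℝ) < G'.dist i j := by exact_mod_cast (hr.mono h).pos_dist_of_ne hij
    exact inv_anti₀ hpos (by exact_mod_cast hr.dist_anti h)
  -- unreachable pairs have `dist = 0`, hence entry `0⁻¹ = 0`
  · rw [SimpleGraph.dist_eq_zero_of_not_reachable hr, Nat.cast_zero, _root_.inv_zero]
    positivity

theorem posSemidef_RDL_sub_RDL {G G' : SimpleGraph V} (h : G ≤ G') :
    (RDL G' - RDL G).PosSemidef := by
  have hsub : RDL G' - RDL G =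
      diagonal (fun i => ∑ j, (RD G' - RD G) i j) - (RD G' - RD G) := by
    ext i j
    rcases eq_or_ne i j with rfl | hij
    · simp only [RDL, RTr, Matrix.sub_apply, diagonal_apply_eq, Finset.sum_sub_distrib]
      abel
    · simp only [RDL, Matrix.sub_apply, diagonal_apply_ne _ hij]
      abel
  rw [hsub]
  exact posSemidef_diagonal_sum_sub ((RD_isSymm G').sub (RD_isSymm G))
    fun i j _ => sub_nonneg.mpr (RD_apply_le_of_le h i j)

end ReciprocalDistance

theorem stmt2_general {V : Type*} [Fintype V] [DecidableEq V] (G G' : SimpleGraph V)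
    (u v : V)
    (hG' : G' = G ⊔ SimpleGraph.fromEdgeSet {s(u, v)})
    (e e' : Fin (Fintype.card V) → ℝ)
    (he : IsEigEnum (RDL G) e) (he' : IsEigEnum (RDL G') e') :
    ∀ i, e i ≤ e' i := by
  have hle : G ≤ G' := hG' ▸ le_sup_left
  rw [he.eq_eigenvalues₀ (RDL_isHermitian G), he'.eq_eigenvalues₀ (RDL_isHermitian G')]
  exact (RDL_isHermitian G).eigenvalues₀_le_eigenvalues₀ _ (posSemidef_RDL_sub_RDL hle)

theorem stmt2 {V : Type*} [Fintype V] [DecidableEq V] (G G' : SimpleGraph V)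
    (hc : G.Connected) (u v : V) (huv : u ≠ v) (hne : ¬ G.Adj u v)
    (hG' : G' = G ⊔ SimpleGraph.fromEdgeSet {s(u, v)})
    (e e' : Fin (Fintype.card V) → ℝ)
    (he : IsEigEnum (RDL G) e) (he' : IsEigEnum (RDL G') e') :
    ∀ i, e i ≤ e' i :=
  stmt2_general G G' u v hG' e e' he he'
end

section
/- Let G be a connected graph on n vertices. Then λ_{n-1}(RD^L(G)) ≤ n, with equality if and only if G is the complete graph K_n. -/
open Matrix Polynomial

/-! Every reciprocal distance is at most `1`, so `tr RD^L(G) = ∑ᵥ RTr(v) ≤ n(n-1)`, with equality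
only if all distances are `1`, i.e. `G = K_n`. The matrix is weakly diagonally dominant, so by
Gershgorin its eigenvalues are nonnegative; hence the `n-1` largest ones, each at least `λ_{n-1}`,
sum to at most the trace, and `(n-1) λ_{n-1} ≤ n(n-1)`. For `K_n`, `M = nI - J` satisfies
`M² = nM`, so its eigenvalues lie in `{0, n}`; were `λ_{n-1} = 0`, the trace `n(n-1)` would be at
most `(n-2) n`. -/

open Finset

namespace Matrix

variable {n : Type*} [Fintype n] [DecidableEq n]

theorem hasEigenvalue_toLin'_of_mem_roots_charpoly {K : Type*} [Field K] {A : Matrix n n K}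
    {t : K} (ht : t ∈ A.charpoly.roots) : Module.End.HasEigenvalue A.toLin' t := by
  rw [Module.End.hasEigenvalue_iff_isRoot_charpoly, charpoly_toLin']
  exact isRoot_of_mem_roots ht

theorem nonneg_of_mem_roots_charpoly_of_diagDominant {A : Matrix n n ℝ}
    (hA : ∀ k, ∑ j ∈ univ.erase k, |A k j| ≤ A k k) {t : ℝ} (ht : t ∈ A.charpoly.roots) :
    0 ≤ t := by
  obtain ⟨k, hk⟩ := eigenvalue_mem_ball (hasEigenvalue_toLin'_of_mem_roots_charpoly ht)
  simp only [Metric.mem_closedBall, Real.dist_eq, Real.norm_eq_abs] at hk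
  linarith [abs_le.1 (hk.trans (hA k)), hA k]

theorem eq_zero_or_eq_of_mem_roots_charpoly_of_mul_self_eq_smul {K : Type*} [Field K]
    {A : Matrix n n K} {c : K} (hA : A * A = c • A) {t : K} (ht : t ∈ A.charpoly.roots) :
    t = 0 ∨ t = c := by
  obtain ⟨x, hx, hx0⟩ := (hasEigenvalue_toLin'_of_mem_roots_charpoly ht).exists_hasEigenvector
  have hAx : A *ᵥ x = t • x := by simpa using Module.End.mem_eigenspace_iff.1 hx
  have hsq : (t * t) • x = (c * t) • x := by
    calc (t * t) • x = A *ᵥ (A *ᵥ x) := by rw [hAx, mulVec_smul, hAx, smul_smul]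
      _ = (c * t) • x := by rw [mulVec_mulVec, hA, smul_mulVec, hAx, smul_smul]
  have hroot : t * (t - c) = 0 := by linear_combination smul_left_injective K hx0 hsq
  simpa [sub_eq_zero] using hroot

end Matrix

namespace IsEigEnum

variable {V : Type*} [Fintype V] [DecidableEq V] {M : Matrix V V ℝ}
  {e : Fin (Fintype.card V) → ℝ}

theorem mem_roots (he : IsEigEnum M e) (j : Fin (Fintype.card V)) : e j ∈ M.charpoly.roots := by
  rw [← he.2]
  exact Multiset.mem_coe.2 (List.mem_ofFn.2 ⟨j, rfl⟩)

theorem sum_eq_trace (he : IsEigEnum M e) : ∑ j, e j = M.trace := by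
  have hsplits : M.charpoly.Splits := by
    rw [splits_iff_card_roots, ← he.2, Multiset.coe_card, List.length_ofFn,
      charpoly_natDegree_eq_dim]
  rw [trace_eq_sum_roots_charpoly_of_splits hsplits, ← he.2, Multiset.sum_coe,
    List.sum_ofFn]

end IsEigEnum

theorem Finset.sum_univ_eq_add_add_sum_sdiff_pair {ι M : Type*} [Fintype ι] [DecidableEq ι]
    [AddCommMonoid M] (f : ι → M) {i l : ι} (hil : i ≠ l) :
    ∑ j, f j = f i + f l + ∑ j ∈ univ \ {i, l}, f j := by
  rw [← sum_pair hil, add_comm, sum_sdiff (subset_univ _)]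

namespace Antitone

variable {n : ℕ} {e : Fin n → ℝ} {i l : Fin n}

theorem mul_add_le_sum (he : Antitone e) (hi : (i : ℕ) = n - 2) (hl : (l : ℕ) = n - 1)
    (hn : 2 ≤ n) : ((n : ℝ) - 1) * e i + e l ≤ ∑ j, e j := by
  have hil : i ≠ l := fun h => by have := congrArg Fin.val h; omega
  have hle : ∀ j ∈ univ \ {i, l}, e i ≤ e j := fun j hj => by
    simp only [mem_sdiff, mem_univ, mem_insert, mem_singleton, true_and] at hj
    exact he (Fin.le_def.2 (by omega))
  have hrest := card_nsmul_le_sum _ _ _ hle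
  rw [card_univ_sdiff, card_pair hil, Fintype.card_fin, nsmul_eq_mul, Nat.cast_sub hn] at hrest
  rw [sum_univ_eq_add_add_sum_sdiff_pair e hil]
  push_cast at hrest
  linarith

theorem sum_le_mul_add (he : Antitone e) (hi : (i : ℕ) = n - 2) (hl : (l : ℕ) = n - 1)
    (hn : 2 ≤ n) {c : ℝ} (hc : ∀ j, e j ≤ c) : ∑ j, e j ≤ ((n : ℝ) - 2) * c + 2 * e i := by
  have hil : i ≠ l := fun h => by have := congrArg Fin.val h; omega
  have hrest := sum_le_card_nsmul (univ \ {i, l}) e c fun j _ => hc j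
  rw [card_univ_sdiff, card_pair hil, Fintype.card_fin, nsmul_eq_mul, Nat.cast_sub hn] at hrest
  have hli : e l ≤ e i := he (Fin.le_def.2 (by omega))
  rw [sum_univ_eq_add_add_sum_sdiff_pair e hil]
  push_cast at hrest
  linarith

end Antitone

section ReciprocalDistance

variable {V : Type*} [Fintype V] [DecidableEq V] (G : SimpleGraph V)

theorem RD_self (v : V) : RD G v v = 0 := if_pos rfl

theorem RD_nonneg (u v : V) : 0 ≤ RD G u v := by
  unfold RD; split_ifs <;> positivity

theorem RD_top_apply (u v : V) : RD ⊤ u v = if u = v then 0 else 1 := by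
  unfold RD
  split_ifs with h
  · rfl
  · simp [SimpleGraph.dist_top_of_ne h]

theorem RD_le_RD_top (u v : V) : RD G u v ≤ RD ⊤ u v := by
  rw [RD_top_apply]
  unfold RD
  split_ifs
  · rfl
  · exact Nat.cast_inv_le_one _

theorem RD_lt_RD_top {u v : V} (huv : u ≠ v) (hadj : ¬G.Adj u v) : RD G u v < RD ⊤ u v := by
  rw [RD_top_apply, RD, if_neg huv, if_neg huv]
  rcases Nat.lt_or_gt_of_ne (mt SimpleGraph.dist_eq_one_iff_adj.1 hadj) with h | h
  · simp [Nat.lt_one_iff.1 h]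
  · exact inv_lt_one_of_one_lt₀ (by exact_mod_cast h)

theorem RTr_top (v : V) : RTr ⊤ v = Fintype.card V - 1 := by
  rw [RTr, ← sum_erase_add _ _ (mem_univ v), RD_self, add_zero,
    sum_congr rfl fun u hu => (RD_top_apply v u).trans (if_neg (ne_of_mem_erase hu).symm),
    sum_const, card_erase_of_mem (mem_univ v), card_univ, nsmul_one,
    Nat.cast_pred (Fintype.card_pos_iff.2 ⟨v⟩)]

theorem sum_RTr_top : ∑ v, RTr (⊤ : SimpleGraph V) v = Fintype.card V * (Fintype.card V - 1) := by
  rw [sum_congr rfl fun v _ => RTr_top v, sum_const, card_univ, nsmul_eq_mul]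

theorem sum_RTr_le : ∑ v, RTr G v ≤ Fintype.card V * (Fintype.card V - 1) := by
  rw [← sum_RTr_top]
  exact sum_le_sum fun v _ => sum_le_sum fun u _ => RD_le_RD_top G v u

theorem sum_RTr_lt_of_ne_top (hG : G ≠ ⊤) :
    ∑ v, RTr G v < Fintype.card V * (Fintype.card V - 1) := by
  obtain ⟨u, v, huv, hadj⟩ : ∃ u v, u ≠ v ∧ ¬G.Adj u v := by
    by_contra! h
    exact hG (by ext u v; rw [SimpleGraph.top_adj]; exact ⟨SimpleGraph.Adj.ne, h u v⟩)
  rw [← sum_RTr_top]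
  refine sum_lt_sum (fun v _ => sum_le_sum fun u _ => RD_le_RD_top G v u) ⟨u, mem_univ u, ?_⟩
  exact sum_lt_sum (fun w _ => RD_le_RD_top G u w) ⟨v, mem_univ v, RD_lt_RD_top G huv hadj⟩

theorem trace_RDL : (RDL G).trace = ∑ v, RTr G v := by
  simp [Matrix.trace, RDL, RD_self]

theorem sum_erase_abs_RDL_le (k : V) : ∑ j ∈ univ.erase k, |RDL G k j| ≤ RDL G k k := by
  rw [RDL, Matrix.sub_apply, diagonal_apply_eq, RD_self, sub_zero, RTr,
    ← sum_erase_add _ _ (mem_univ k), RD_self, add_zero]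
  refine (sum_congr rfl fun j hj => ?_).le
  rw [Matrix.sub_apply, diagonal_apply_ne _ (ne_of_mem_erase hj).symm, zero_sub, abs_neg,
    abs_of_nonneg (RD_nonneg G k j)]

theorem RDL_top : RDL (⊤ : SimpleGraph V) = (Fintype.card V : ℝ) • 1 - of fun _ _ => 1 := by
  ext u v
  by_cases h : u = v <;> simp [RDL, RTr_top, RD_top_apply, h]

theorem RDL_top_mul_self :
    RDL (⊤ : SimpleGraph V) * RDL ⊤ = (Fintype.card V : ℝ) • RDL (⊤ : SimpleGraph V) := by
  have hJ : (of fun _ _ => 1 : Matrix V V ℝ) * of (fun _ _ => 1) =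
      (Fintype.card V : ℝ) • of fun _ _ => 1 := by
    ext u v; simp [mul_apply]
  rw [RDL_top, sub_mul, mul_sub, mul_sub, hJ]
  simp only [smul_mul_assoc, mul_smul_comm, one_mul, mul_one]
  module

end ReciprocalDistance

theorem stmt5_general {V : Type*} [Fintype V] [DecidableEq V] (G : SimpleGraph V)
    (hn : 2 ≤ Fintype.card V)
    (e : Fin (Fintype.card V) → ℝ) (he : IsEigEnum (RDL G) e) :
    ∀ i : Fin (Fintype.card V), (i : ℕ) = Fintype.card V - 2 →
      e i ≤ (Fintype.card V : ℝ) ∧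
        (e i = (Fintype.card V : ℝ) ↔ G = (⊤ : SimpleGraph V)) := by
  intro i hi
  have hN : (2 : ℝ) ≤ Fintype.card V := by exact_mod_cast hn
  let l : Fin (Fintype.card V) := ⟨Fintype.card V - 1, by omega⟩
  have hsum : ∑ j, e j = ∑ v, RTr G v := by rw [he.sum_eq_trace, trace_RDL]
  have hl : 0 ≤ e l :=
    nonneg_of_mem_roots_charpoly_of_diagDominant (sum_erase_abs_RDL_le G) (he.mem_roots l)
  have hlower := he.1.mul_add_le_sum (l := l) hi rfl hn
  refine ⟨by nlinarith [sum_RTr_le G], fun heq => ?_, fun hG => ?_⟩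
  · by_contra hG
    nlinarith [sum_RTr_lt_of_ne_top G hG]
  · subst hG
    have hroots (j) : e j = 0 ∨ e j = Fintype.card V :=
      eq_zero_or_eq_of_mem_roots_charpoly_of_mul_self_eq_smul RDL_top_mul_self (he.mem_roots j)
    have hupper := he.1.sum_le_mul_add (l := l) (c := Fintype.card V) hi rfl hn fun j => by
      rcases hroots j with h | h <;> linarith
    rcases hroots i with h | h
    · nlinarith [sum_RTr_top (V := V)]
    · exact h

theorem stmt5 {V : Type*} [Fintype V] [DecidableEq V] (G : SimpleGraph V)
    (hc : G.Connected) (hn : 2 ≤ Fintype.card V)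
    (e : Fin (Fintype.card V) → ℝ) (he : IsEigEnum (RDL G) e) :
    ∀ i : Fin (Fintype.card V), (i : ℕ) = Fintype.card V - 2 →
      e i ≤ (Fintype.card V : ℝ) ∧
        (e i = (Fintype.card V : ℝ) ↔ G = (⊤ : SimpleGraph V)) :=
  stmt5_general G hn e he
end

section
/- Let G be a connected graph on n vertices with G ≇ K_n, and let D = {v ∈ V(G) : deg_G(v) = n−1} be the set of dominating vertices. Then n is an eigenvalue of RD^L(G) with multiplicity at least |D|. -/
open Matrix Polynomial

/-!
Rows of `RD^L(G)` sum to zero, so `RD^L(G) 𝟙 = 0`. If `v` is a dominating vertex, every entry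
`1 / d(u, v)` of its column in `RD(G)` is `1`, so the column `RD^L(G) e_v` is `n e_v - 𝟙`, and
applying `RD^L(G)` once more shows that `n e_v - 𝟙` is an eigenvector for `n`. Since `G ≠ K_n`
some vertex `w` is not dominating, and these vectors are linearly independent: reading a vanishing
combination off at `w` shows that its coefficients sum to zero, and then reading it off at `v`
gives `n` times the coefficient of `v`. Finally, the geometric multiplicity of an eigenvalue is at
most its algebraic multiplicity.
-/

theorem Matrix.card_le_count_charpoly_roots {K n ι : Type*} [Field K] [DecidableEq K]
    [Fintype n] [DecidableEq n] [Fintype ι] (A : Matrix n n K) (μ : K) {x : ι → n → K}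
    (hx : LinearIndependent K x) (hAx : ∀ i, A *ᵥ x i = μ • x i) :
    Fintype.card ι ≤ A.charpoly.roots.count μ := by
  rw [count_roots, ← Matrix.charpoly_toLin', ← finrank_span_eq_card hx]
  refine (Submodule.finrank_mono ?_).trans (A.toLin'.finrank_eigenspace_le μ)
  rw [Submodule.span_le]
  rintro _ ⟨i, rfl⟩
  exact Module.End.mem_eigenspace_iff.mpr (by simpa using hAx i)

theorem linearIndependent_smul_single_sub_one {K V : Type*} [Field K] [DecidableEq V]
    {s : Finset V} {w : V} (hw : w ∉ s) {c : K} (hc : c ≠ 0) :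
    LinearIndependent K (fun v : s => c • Pi.single (v : V) (1 : K) - 1) := by
  rw [Fintype.linearIndependent_iff]
  intro g hg
  have hg_apply (u : V) :
      c * ∑ v : s, g v * Pi.single (M := fun _ => K) (v : V) 1 u = ∑ v, g v := by
    have := congrFun hg u
    simp only [Finset.sum_apply, Pi.smul_apply, Pi.sub_apply, Pi.one_apply, smul_eq_mul,
      Pi.zero_apply, mul_sub, mul_one, Finset.sum_sub_distrib, Finset.mul_sum, sub_eq_zero]
      at this ⊢
    rw [← this]
    congr 1 with v
    ring
  have hsum : ∑ v, g v = 0 := by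
    rw [← hg_apply w]
    simp [ne_of_mem_of_not_mem (Finset.coe_mem _) hw]
  intro i
  simpa only [Pi.single_apply, Subtype.coe_inj, mul_ite, mul_one, mul_zero, Finset.sum_ite_eq,
    Finset.mem_univ, if_true, hsum, mul_eq_zero, hc, false_or] using hg_apply i

section ReciprocalDistance

variable {V : Type*} [Fintype V] [DecidableEq V] (G : SimpleGraph V)

lemma RD_comm (u v : V) : RD G u v = RD G v u := by
  simp [RD, eq_comm, SimpleGraph.dist_comm]

lemma RD_row_of_isUniversal {v : V} (hv : G.IsUniversal v) : RD G v = 1 - Pi.single v 1 := by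
  ext u
  rcases eq_or_ne v u with rfl | h
  · simp [RD]
  · simp [RD, h, h.symm, SimpleGraph.dist_eq_one_iff_adj.mpr (hv h)]

lemma RTr_of_isUniversal {v : V} (hv : G.IsUniversal v) : RTr G v = Fintype.card V - 1 := by
  simp [RTr, RD_row_of_isUniversal G hv, Finset.sum_sub_distrib]

lemma RDL_mulVec_one : RDL G *ᵥ 1 = 0 := by
  ext u
  rw [RDL, sub_mulVec]
  simp only [Pi.sub_apply, mulVec_diagonal, Pi.one_apply, mul_one, Pi.zero_apply]
  simp [RTr, mulVec, dotProduct]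

lemma RDL_col_of_isUniversal {v : V} (hv : G.IsUniversal v) :
    (RDL G).col v = (Fintype.card V : ℝ) • Pi.single v 1 - 1 := by
  ext u
  rcases eq_or_ne u v with rfl | h
  · simp [RDL, RTr_of_isUniversal G hv, RD]
  · simp [RDL, h, RD_comm G u v, RD_row_of_isUniversal G hv]

lemma RDL_mulVec_of_isUniversal {v : V} (hv : G.IsUniversal v) :
    RDL G *ᵥ ((Fintype.card V : ℝ) • Pi.single v 1 - 1) =
      (Fintype.card V : ℝ) • ((Fintype.card V : ℝ) • Pi.single v 1 - 1) := by
  rw [mulVec_sub, mulVec_smul, mulVec_single_one, RDL_col_of_isUniversal G hv, RDL_mulVec_one,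
    sub_zero]

end ReciprocalDistance

theorem stmt6_general {V : Type*} [Fintype V] [DecidableEq V] (G : SimpleGraph V) [DecidableRel G.Adj]
    (hnc : G ≠ (⊤ : SimpleGraph V)) :
    (Finset.univ.filter fun w => G.degree w = Fintype.card V - 1).card ≤
      Multiset.count ((Fintype.card V : ℝ)) (RDL G).charpoly.roots := by
  set D := Finset.univ.filter fun w => G.degree w = Fintype.card V - 1
  obtain ⟨w, hw⟩ : ∃ w, ¬ G.IsUniversal w := by
    simpa [SimpleGraph.eq_top_iff_forall_isUniversal] using hnc
  have hwD : w ∉ D := by simpa [D] using hw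
  have hn : (Fintype.card V : ℝ) ≠ 0 := Nat.cast_ne_zero.mpr (Fintype.card_pos_iff.mpr ⟨w⟩).ne'
  rw [← Fintype.card_coe D]
  refine (RDL G).card_le_count_charpoly_roots _ (linearIndependent_smul_single_sub_one hwD hn)
    fun v => RDL_mulVec_of_isUniversal G ?_
  exact (G.degree_eq_card_sub_one v).mp (Finset.mem_filter.mp v.2).2

theorem stmt6 {V : Type*} [Fintype V] [DecidableEq V] (G : SimpleGraph V) [DecidableRel G.Adj]
    (hc : G.Connected) (hnc : G ≠ (⊤ : SimpleGraph V)) :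
    (Finset.univ.filter fun w => G.degree w = Fintype.card V - 1).card ≤
      Multiset.count ((Fintype.card V : ℝ)) (RDL G).charpoly.roots :=
  stmt6_general G hnc
end

section
/- Let G be a connected graph on n ≥ 2 vertices and M = {v_1,...,v_r} an independent set such that all vertices in M have the same neighborhood: N_G(v_i) = N_G(v_j) for all 1 ≤ i,j ≤ r. Then all vertices of M have the same reciprocal distance degree T, and T + 1/2 is an eigenvalue of RD^L(G) with multiplicity at least r − 1. -/
/-!
Interchanging two vertices with the same neighbourhood is a graph automorphism, so it preserves
distances and therefore the reciprocal distance Laplacian `L`. Hence all vertices of `M` have the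
same reciprocal distance degree `T`, and for distinct `u, w ∈ M` the vector `e_u - e_w` is an
eigenvector of `L` with eigenvalue `L u u - L u w = T + 1/2`, because `d(u, w) = 2`. Fixing
`v ∈ M`, the `r - 1` vectors `e_u - e_v` are linearly independent, and the geometric multiplicity
of an eigenvalue is at most its algebraic multiplicity.
-/

open Matrix Polynomial

namespace SimpleGraph

variable {V W : Type*} {G : SimpleGraph V} {G' : SimpleGraph W}

lemma Hom.edist_le (f : G →g G') (a b : V) : G'.edist (f a) (f b) ≤ G.edist a b := by
  by_cases h : G.Reachable a b
  · obtain ⟨p, hp⟩ := h.exists_walk_length_eq_edist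
    rw [← hp, ← p.length_map f]
    exact SimpleGraph.edist_le _
  · simp [edist_eq_top_of_not_reachable h]

lemma Iso.edist_eq (e : G ≃g G') (a b : V) : G'.edist (e a) (e b) = G.edist a b := by
  refine le_antisymm (Hom.edist_le e.toHom a b) ?_
  simpa using Hom.edist_le e.symm.toHom (e a) (e b)

lemma Iso.dist_eq (e : G ≃g G') (a b : V) : G'.dist (e a) (e b) = G.dist a b := by
  simp only [dist, e.edist_eq]

section Twins

variable {u w : V}

lemma adj_swap_left_iff_of_neighborSet_eq [DecidableEq V]
    (h : G.neighborSet u = G.neighborSet w) (a b : V) :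
    G.Adj (Equiv.swap u w a) b ↔ G.Adj a b := by
  have hadj : ∀ x, G.Adj u x ↔ G.Adj w x := fun x => Set.ext_iff.mp h x
  rw [Equiv.swap_apply_def]
  split_ifs with hu hw
  · rw [hu, hadj]
  · rw [hw, hadj]
  · rfl

def Iso.swapOfNeighborSetEq [DecidableEq V] (h : G.neighborSet u = G.neighborSet w) :
    G ≃g G where
  toEquiv := Equiv.swap u w
  map_rel_iff' {a b} := by
    change G.Adj (Equiv.swap u w a) (Equiv.swap u w b) ↔ G.Adj a b
    rw [adj_swap_left_iff_of_neighborSet_eq h, adj_comm, adj_swap_left_iff_of_neighborSet_eq h,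
      adj_comm]

lemma Iso.swapOfNeighborSetEq_apply [DecidableEq V] (h : G.neighborSet u = G.neighborSet w)
    (a : V) : Iso.swapOfNeighborSetEq h a = Equiv.swap u w a :=
  rfl

lemma not_adj_of_neighborSet_eq (h : G.neighborSet u = G.neighborSet w) : ¬ G.Adj u w := by
  intro huw
  have : w ∈ G.neighborSet w := h ▸ huw
  exact G.irrefl this

lemma Connected.dist_eq_two_of_neighborSet_eq (hc : G.Connected) (hne : u ≠ w)
    (h : G.neighborSet u = G.neighborSet w) : G.dist u w = 2 := by
  have : Nontrivial V := ⟨⟨u, w, hne⟩⟩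
  obtain ⟨x, hx⟩ := hc.preconnected.exists_adj_of_nontrivial u
  have hcommon : (G.commonNeighbors u w).Nonempty :=
    ⟨x, hx, show x ∈ G.neighborSet w from h ▸ hx⟩
  have h2 : G.edist u w = 2 :=
    edist_eq_two_iff.mpr ⟨hne, not_adj_of_neighborSet_eq h, hcommon⟩
  rw [dist, h2]
  rfl

end Twins

end SimpleGraph

namespace Matrix

variable {n : Type*} [Fintype n] [DecidableEq n]

lemma mulVec_single_sub_single_of_swap_invariant {R : Type*} [CommRing R] (A : Matrix n n R)
    {u w : n} (hA : ∀ a b, A (Equiv.swap u w a) (Equiv.swap u w b) = A a b) :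
    A *ᵥ (Pi.single u 1 - Pi.single w 1) =
      (A u u - A u w) • (Pi.single u 1 - Pi.single w 1) := by
  have hww : A w w = A u u := by simpa using hA u u
  have hwu : A w u = A u w := by simpa using hA u w
  funext a
  simp only [mulVec_sub, mulVec_single_one, Pi.sub_apply, col_apply, Pi.smul_apply,
    smul_eq_mul, Pi.single_apply]
  by_cases hau : a = u
  · subst hau
    by_cases haw : a = w <;> simp [haw]
  by_cases haw : a = w
  · subst haw
    simp [hau, hww, hwu]
  · have haw_au : A a w = A a u := by
      simpa [Equiv.swap_apply_of_ne_of_ne hau haw] using hA a u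
    simp [hau, haw, haw_au]

lemma card_le_count_roots_charpoly {K ι : Type*} [Field K] [DecidableEq K] [Fintype ι]
    (A : Matrix n n K) (μ : K) (v : ι → n → K) (hv : LinearIndependent K v)
    (hAv : ∀ i, A *ᵥ v i = μ • v i) :
    Fintype.card ι ≤ A.charpoly.roots.count μ := by
  let E := Module.End.eigenspace (toLin' A) μ
  let v' : ι → E := fun i => ⟨v i, Module.End.mem_eigenspace_iff.mpr (hAv i)⟩
  have hv' : LinearIndependent K v' := LinearIndependent.of_comp E.subtype hv
  calc Fintype.card ι ≤ Module.finrank K E := hv'.fintype_card_le_finrank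
    _ ≤ (toLin' A).charpoly.rootMultiplicity μ := LinearMap.finrank_eigenspace_le _ μ
    _ = A.charpoly.roots.count μ := by rw [charpoly_toLin', Polynomial.count_roots]

end Matrix

lemma linearIndependent_single_sub_single {R n : Type*} [Ring R] [DecidableEq n] {s : Finset n}
    {w : n} (hw : w ∉ s) :
    LinearIndependent R (fun i : s => (Pi.single (i : n) 1 - Pi.single w 1 : n → R)) := by
  refine LinearIndependent.of_comp (LinearMap.funLeft R R ((↑) : s → n)) ?_
  convert Pi.linearIndependent_single_one s R with i
  funext j
  have hj : (j : n) ≠ w := fun h => hw (h ▸ j.2)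
  simp only [Function.comp_apply, LinearMap.funLeft_apply, Pi.sub_apply, Pi.single_apply, hj,
    if_false, sub_zero, Subtype.ext_iff]

section ReciprocalDistance

open SimpleGraph

variable {V : Type*} [Fintype V] [DecidableEq V] {G : SimpleGraph V}

lemma RD_apply_iso (e : G ≃g G) (a b : V) : RD G (e a) (e b) = RD G a b := by
  simp [RD, e.dist_eq]

lemma RTr_apply_iso (e : G ≃g G) (a : V) : RTr G (e a) = RTr G a := by
  rw [RTr, ← Equiv.sum_comp e.toEquiv]
  exact Finset.sum_congr rfl fun b _ => RD_apply_iso e a b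

lemma RDL_apply_iso (e : G ≃g G) (a b : V) : RDL G (e a) (e b) = RDL G a b := by
  simp [RDL, diagonal_apply, RTr_apply_iso, RD_apply_iso]

lemma RTr_eq_of_neighborSet_eq {u w : V} (h : G.neighborSet u = G.neighborSet w) :
    RTr G u = RTr G w := by
  simpa [Iso.swapOfNeighborSetEq_apply] using (RTr_apply_iso (Iso.swapOfNeighborSetEq h) u).symm

lemma RDL_mulVec_single_sub_single (hc : G.Connected) {u w : V} (hne : u ≠ w)
    (h : G.neighborSet u = G.neighborSet w) :
    RDL G *ᵥ (Pi.single u 1 - Pi.single w 1) =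
      (RTr G u + 1 / 2) • (Pi.single u 1 - Pi.single w 1) := by
  have hsymm : ∀ a b, RDL G (Equiv.swap u w a) (Equiv.swap u w b) = RDL G a b :=
    RDL_apply_iso (Iso.swapOfNeighborSetEq h)
  rw [mulVec_single_sub_single_of_swap_invariant _ hsymm]
  congr 1
  simp [RDL, RD, hne, hc.dist_eq_two_of_neighborSet_eq hne h]

end ReciprocalDistance

theorem stmt9_general {V : Type*} [Fintype V] [DecidableEq V] (G : SimpleGraph V)
    (hc : G.Connected)
    (M : Finset V)
    (hnbr : ∀ u ∈ M, ∀ w ∈ M, G.neighborSet u = G.neighborSet w) :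
    ∃ T : ℝ, (∀ v ∈ M, RTr G v = T) ∧
      M.card - 1 ≤ Multiset.count (T + 1/2) (RDL G).charpoly.roots := by
  rcases M.eq_empty_or_nonempty with rfl | ⟨v, hv⟩
  · exact ⟨0, by simp, by simp⟩
  have hT : ∀ u ∈ M, RTr G u = RTr G v := fun u hu => RTr_eq_of_neighborSet_eq (hnbr u hu v hv)
  refine ⟨RTr G v, hT, ?_⟩
  have hcount := Matrix.card_le_count_roots_charpoly (RDL G) (RTr G v + 1 / 2) _
    (linearIndependent_single_sub_single (M.notMem_erase v)) fun u => by
      obtain ⟨hne, hu⟩ := Finset.mem_erase.mp u.2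
      rw [RDL_mulVec_single_sub_single hc hne (hnbr u hu v hv), hT u hu]
  rwa [Fintype.card_coe, Finset.card_erase_of_mem hv] at hcount

theorem stmt9 {V : Type*} [Fintype V] [DecidableEq V] (G : SimpleGraph V)
    (hc : G.Connected) (hn : 2 ≤ Fintype.card V)
    (M : Finset V) (hind : ∀ u ∈ M, ∀ w ∈ M, ¬ G.Adj u w)
    (hnbr : ∀ u ∈ M, ∀ w ∈ M, G.neighborSet u = G.neighborSet w) :
    ∃ T : ℝ, (∀ v ∈ M, RTr G v = T) ∧
      M.card - 1 ≤ Multiset.count (T + 1/2) (RDL G).charpoly.roots :=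
  stmt9_general G hc M hnbr
end

section
/- The reciprocal distance Laplacian characteristic polynomial of the complete k-partite graph K_{n_1,...,n_k} on n = n_1+...+n_k vertices is x(x−n)^{k−1} ∏_{i=1}^{k} (x − (n − n_i/2))^{n_i − 1}. Equivalently, its RD^L-spectrum consists of 0 (once), n with multiplicity k−1, and n − n_i/2 with multiplicity n_i − 1 for each i. -/
open Matrix Polynomial

/-!
Off the finitely many candidate eigenvalues, `x • 1 - RD^L` of `K_{n_1,…,n_k}` is `Δ + E C Eᵀ`,
where `Δ` is diagonal with entry `a_i = x - (n - n_i/2)` on part `i`, `E` is the vertex–part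
incidence matrix and `C = J - I/2`. The matrix determinant lemma turns its determinant into
`∏ a_i^{n_i}` times the `k × k` determinant `det (1 + C · diag (n_i/a_i))`, which is diagonal plus
rank one. Since `a_i (1 - n_i/(2 a_i)) = x - n`, everything collapses to
`x (x - n)^{k-1} ∏ a_i^{n_i-1}`, and two real polynomials agreeing at infinitely many points
are equal.
-/

namespace Matrix

variable {K : Type*} [Field K] {m : Type*} [Fintype m] [DecidableEq m]

theorem inv_diagonal_of_ne_zero {d : m → K} (hd : ∀ i, d i ≠ 0) :
    (diagonal d)⁻¹ = diagonal fun i => (d i)⁻¹ :=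
  inv_eq_left_inv <| by simp [diagonal_mul_diagonal, hd]

theorem det_diagonal_add_replicateCol_mul_replicateRow {d : m → K} (hd : ∀ i, d i ≠ 0)
    (u v : m → K) :
    (diagonal d + replicateCol Unit u * replicateRow Unit v).det =
      (∏ i, d i) * (1 + ∑ i, u i * v i / d i) := by
  have hdet : IsUnit (diagonal d).det := by
    simpa [det_diagonal] using Finset.prod_ne_zero_iff.mpr fun i _ => hd i
  rw [det_add_replicateCol_mul_replicateRow hdet, det_diagonal, det_unique,
    inv_diagonal_of_ne_zero hd]
  simp only [PUnit.default_eq_unit, add_apply, one_apply_eq, mul_apply, replicateRow_apply,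
    replicateCol_apply, diagonal_apply, mul_ite, mul_zero, Finset.sum_ite_eq', Finset.mem_univ,
    ite_true]
  congr 2
  exact Finset.sum_congr rfl fun i _ => by ring

theorem det_one_add_allOnes_sub_smul_mul_diagonal {c : K} {d : m → K}
    (hd : ∀ i, 1 - c * d i ≠ 0) :
    (1 + (of (fun _ _ => 1) - c • 1 : Matrix m m K) * diagonal d).det =
      (∏ i, (1 - c * d i)) * (1 + ∑ i, d i / (1 - c * d i)) := by
  have hsplit : 1 + (of (fun _ _ => 1) - c • 1 : Matrix m m K) * diagonal d =
      diagonal (fun i => 1 - c * d i) + replicateCol Unit (1 : m → K) * replicateRow Unit d := by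
    ext i j
    rw [Matrix.add_apply, Matrix.add_apply, mul_diagonal]
    by_cases hij : i = j
    · subst hij
      simp only [one_apply_eq, sub_apply, of_apply, smul_apply, smul_eq_mul, mul_one,
        diagonal_apply_eq, mul_apply, Finset.univ_unique, replicateCol_apply, Pi.one_apply,
        replicateRow_apply, one_mul, Finset.sum_const, Finset.card_singleton, one_smul]
      ring
    · simp [hij, mul_apply]
  rw [hsplit, det_diagonal_add_replicateCol_mul_replicateRow hd]
  simp

theorem det_diagonal_add_submatrix_fst {ι : Type*} [Fintype ι] [DecidableEq ι] {V : ι → Type*}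
    [∀ i, Fintype (V i)] [∀ i, DecidableEq (V i)] {a : ι → K} (ha : ∀ i, a i ≠ 0)
    (C : Matrix ι ι K) :
    (diagonal (fun u : Σ i, V i => a u.1) + C.submatrix Sigma.fst Sigma.fst).det =
      (∏ i, a i ^ Fintype.card (V i)) *
        (1 + C * diagonal fun i => (Fintype.card (V i) : K) / a i).det := by
  let E : Matrix (Σ i, V i) ι K := of fun u i => if u.1 = i then 1 else 0
  have hC : C.submatrix Sigma.fst Sigma.fst = E * (C * Eᵀ) := by
    ext u v
    simp [E, mul_apply]
  have hE : Eᵀ * ((diagonal fun u : Σ i, V i => a u.1)⁻¹ * E) =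
      diagonal fun i => (Fintype.card (V i) : K) / a i := by
    rw [inv_diagonal_of_ne_zero fun u : Σ i, V i => ha u.1]
    ext i j
    by_cases hij : i = j <;>
      simp [E, mul_apply, diagonal_apply, Fintype.sum_sigma, hij, div_eq_mul_inv]
  have hdet : IsUnit (diagonal fun u : Σ i, V i => a u.1).det := by
    simpa [det_diagonal] using Finset.prod_ne_zero_iff.mpr fun u _ => ha u.1
  rw [hC, det_add_mul _ _ hdet, det_diagonal, Fintype.prod_sigma]
  simp only [Matrix.mul_assoc, hE, Finset.prod_const, Finset.card_univ]

end Matrix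

namespace SimpleGraph.completeMultipartiteGraph

variable {ι : Type*} {V : ι → Type*}

theorem dist_of_fst_ne {u v : Σ i, V i} (h : u.1 ≠ v.1) :
    (completeMultipartiteGraph V).dist u v = 1 :=
  dist_eq_one_iff_adj.mpr h

theorem dist_of_fst_eq [Nontrivial ι] [∀ i, Nonempty (V i)] {u v : Σ i, V i} (hne : u ≠ v)
    (h : u.1 = v.1) : (completeMultipartiteGraph V).dist u v = 2 := by
  obtain ⟨j, hj⟩ := exists_ne u.1
  let w : Σ i, V i := ⟨j, Classical.arbitrary _⟩
  have hw : w ∈ (completeMultipartiteGraph V).commonNeighbors u v :=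
    (mem_commonNeighbors _).mpr ⟨hj.symm, show v.1 ≠ j from h ▸ hj.symm⟩
  rw [dist, edist_eq_two_iff.mpr ⟨hne, by simp [h], w, hw⟩]
  rfl

variable [Fintype ι] [DecidableEq ι] [∀ i, Fintype (V i)] [∀ i, DecidableEq (V i)]
  [Nontrivial ι] [∀ i, Nonempty (V i)]

theorem RD_apply (u v : Σ i, V i) :
    RD (completeMultipartiteGraph V) u v = if u = v then 0 else if u.1 = v.1 then 1 / 2 else 1 := by
  by_cases huv : u = v
  · simp [RD, huv]
  by_cases h : u.1 = v.1
  · simp [RD, huv, h, dist_of_fst_eq huv h]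
  · simp [RD, huv, h, dist_of_fst_ne h]

theorem RTr_apply (u : Σ i, V i) :
    RTr (completeMultipartiteGraph V) u =
      Fintype.card (Σ i, V i) - Fintype.card (V u.1) / 2 - 1 / 2 := by
  have hRD : ∀ v, RD (completeMultipartiteGraph V) u v =
      1 - (if u.1 = v.1 then 1 / 2 else 0) - if u = v then 1 / 2 else 0 := by
    intro v
    rw [RD_apply]
    by_cases huv : u = v
    · norm_num [huv]
    · by_cases h : u.1 = v.1 <;> norm_num [huv, h]
  have hpart : ∑ v : Σ i, V i, (if u.1 = v.1 then (1 / 2 : ℝ) else 0) =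
      Fintype.card (V u.1) / 2 := by
    rw [Fintype.sum_sigma' (fun i _ => if u.1 = i then (1 / 2 : ℝ) else 0)]
    simp [div_eq_mul_inv]
  simp only [RTr, hRD, Finset.sum_sub_distrib, hpart, Finset.sum_const, Finset.card_univ,
    Finset.sum_ite_eq, Finset.mem_univ, if_true, nsmul_eq_mul, mul_one]

theorem scalar_sub_RDL (x : ℝ) :
    scalar _ x - RDL (completeMultipartiteGraph V) =
      diagonal (fun u : Σ i, V i => x - (Fintype.card (Σ i, V i) - Fintype.card (V u.1) / 2)) +
        (of (fun _ _ => 1) - (1 / 2 : ℝ) • 1 : Matrix ι ι ℝ).submatrix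
          Sigma.fst Sigma.fst := by
  ext u v
  by_cases huv : u = v
  · subst huv
    simp only [scalar_apply, RDL, Matrix.sub_apply, diagonal_apply_eq, RTr_apply, RD_apply,
      ite_true, sub_zero, Matrix.add_apply, submatrix_apply, of_apply, Matrix.smul_apply,
      one_apply_eq, smul_eq_mul, mul_one]
    ring
  · by_cases h : u.1 = v.1 <;> norm_num [RDL, RD_apply, huv, h]

theorem eval_charpoly_RDL {x : ℝ} (hx : x ≠ Fintype.card (Σ i, V i))
    (hxi : ∀ i, x ≠ Fintype.card (Σ i, V i) - Fintype.card (V i) / 2) :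
    (RDL (completeMultipartiteGraph V)).charpoly.eval x =
      x * (x - Fintype.card (Σ i, V i)) ^ (Fintype.card ι - 1) *
        ∏ i, (x - (Fintype.card (Σ i, V i) - Fintype.card (V i) / 2)) ^
          (Fintype.card (V i) - 1) := by
  set N : ℝ := (Fintype.card (Σ i, V i) : ℝ) with hN
  set a : ι → ℝ := fun i => x - (N - Fintype.card (V i) / 2) with ha_def
  have ha : ∀ i, a i ≠ 0 := fun i => sub_ne_zero.mpr (hxi i)
  set d : ι → ℝ := fun i => Fintype.card (V i) / a i with hd_def
  have hxN : x - N ≠ 0 := sub_ne_zero.mpr hx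
  have had : ∀ i, a i * (1 - 1 / 2 * d i) = x - N := fun i => by
    have := ha i
    simp only [hd_def]
    field_simp
    simp only [ha_def]
    ring
  have hb : ∀ i, 1 - 1 / 2 * d i ≠ 0 := fun i h => hxN (by rw [← had i, h, mul_zero])
  have hfactor : ∀ i, a i ^ Fintype.card (V i) * (1 - 1 / 2 * d i) =
      (x - N) * a i ^ (Fintype.card (V i) - 1) := fun i => by
    rw [← pow_sub_one_mul Fintype.card_ne_zero, mul_assoc, had, mul_comm]
  have hsum : ∑ i, d i / (1 - 1 / 2 * d i) = N / (x - N) := by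
    have hterm : ∀ i, d i / (1 - 1 / 2 * d i) = Fintype.card (V i) / (x - N) := fun i => by
      rw [← had i, mul_comm, ← div_div, div_right_comm]
    rw [Finset.sum_congr rfl fun i _ => hterm i, ← Finset.sum_div, hN, Fintype.card_sigma]
    push_cast
    rfl
  show _ = x * (x - N) ^ (Fintype.card ι - 1) * ∏ i, a i ^ (Fintype.card (V i) - 1)
  rw [eval_charpoly, scalar_sub_RDL, det_diagonal_add_submatrix_fst ha,
    det_one_add_allOnes_sub_smul_mul_diagonal hb, ← mul_assoc, ← Finset.prod_mul_distrib,
    Finset.prod_congr rfl fun i _ => hfactor i, Finset.prod_mul_distrib, Finset.prod_const,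
    Finset.card_univ, hsum, ← pow_sub_one_mul Fintype.card_ne_zero (x - N)]
  field_simp
  ring

theorem charpoly_RDL :
    (RDL (completeMultipartiteGraph V)).charpoly =
      X * (X - C (Fintype.card (Σ i, V i) : ℝ)) ^ (Fintype.card ι - 1) *
        ∏ i, (X - C ((Fintype.card (Σ i, V i) : ℝ) - Fintype.card (V i) / 2)) ^
          (Fintype.card (V i) - 1) := by
  set N : ℝ := (Fintype.card (Σ i, V i) : ℝ)
  have hfin : (insert N (Set.range fun i => N - Fintype.card (V i) / 2)).Finite :=
    (Set.finite_range _).insert N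
  refine eq_of_infinite_eval_eq _ _ (hfin.infinite_compl.mono fun x hx => ?_)
  simp only [Set.mem_compl_iff, Set.mem_insert_iff, Set.mem_range, not_or, not_exists] at hx
  rw [Set.mem_ofPred_eq, eval_charpoly_RDL hx.1 fun i => Ne.symm (hx.2 i)]
  simp only [eval_mul, eval_pow, eval_prod, eval_sub, eval_X, eval_C]
  rfl

end SimpleGraph.completeMultipartiteGraph

theorem stmt11 (k : ℕ) (hk : 2 ≤ k) (nf : Fin k → ℕ) (hnf : ∀ i, 1 ≤ nf i)
    (n : ℕ) (hn : n = ∑ i, nf i) :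
    (RDL (SimpleGraph.completeMultipartiteGraph fun i => Fin (nf i))).charpoly =
      X * (X - C (n : ℝ)) ^ (k - 1) *
        ∏ i, (X - C ((n : ℝ) - (nf i : ℝ) / 2)) ^ (nf i - 1) := by
  have : Nontrivial (Fin k) := Fin.nontrivial_iff_two_le.mpr hk
  have : ∀ i, Nonempty (Fin (nf i)) := fun i => Fin.pos_iff_nonempty.mp (hnf i)
  simpa [hn] using SimpleGraph.completeMultipartiteGraph.charpoly_RDL (V := fun i => Fin (nf i))
end

section
/- The reciprocal distance Laplacian spectrum of the star S_n = K_{1,n-1} is {0, n, ((n+1)/2)^{(n−2)}}. -/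
open Matrix Polynomial

/-!
Let `J` be the all-ones matrix. Conjugating `RD^L(K_{1,m})` by the unipotent matrix whose columns
are the all-ones vector followed by the leaf basis vectors makes it block upper triangular: the
all-ones vector spans the kernel (row sums of `RD^L` vanish), and the leaf block becomes
`((m + 2) / 2) • 1 + 2⁻¹ • J`. A matrix `a • 1 + b • J` of size `m` has characteristic polynomial
`(X - (a + m b)) (X - a) ^ (m - 1)`, since `J` has rank one.
-/

namespace Matrix

variable {R n : Type*} [CommRing R] [Fintype n] [DecidableEq n]

theorem charpoly_mul_mul_eq_of_mul_eq_one {M P Q : Matrix n n R} (h : P * Q = 1) :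
    (Q * M * P).charpoly = M.charpoly := by
  rw [charpoly_mul_comm, ← mul_assoc, h, one_mul]

theorem charpoly_scalar_add_smul_of_one [Nonempty n] (a b : R) :
    (scalar n a + b • of 1).charpoly =
      (X - C (a + Fintype.card n * b)) * (X - C a) ^ (Fintype.card n - 1) := by
  have hJ : b • of 1 = vecMulVec (fun _ : n => b) (1 : n → R) := by
    ext; simp [vecMulVec_apply]
  have hdot : (fun _ : n => b) ⬝ᵥ 1 = Fintype.card n * b := by simp [dotProduct]
  obtain ⟨k, hk⟩ : ∃ k, Fintype.card n = k + 1 :=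
    ⟨_, (Nat.succ_pred_eq_of_pos Fintype.card_pos).symm⟩
  rw [add_comm, ← sub_neg_eq_add, ← map_neg, charpoly_sub_scalar, hJ, charpoly_vecMulVec, hdot,
    hk, add_tsub_cancel_right, pow_succ, smul_eq_C_mul,
    show X ^ k * X - C (↑(k + 1) * b) * X ^ k = (X - C (↑(k + 1) * b)) * X ^ k by ring,
    mul_comp, pow_comp, sub_comp, X_comp, C_comp, map_neg, map_add]
  ring

end Matrix

namespace SimpleGraph

variable {V W : Type*}

theorem completeBipartiteGraph_dist_inl_inr (v : V) (w : W) :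
    (completeBipartiteGraph V W).dist (.inl v) (.inr w) = 1 :=
  dist_eq_one_iff_adj.mpr (by simp)

theorem completeBipartiteGraph_dist_inr_inr [Nonempty V] {w w' : W} (h : w ≠ w') :
    (completeBipartiteGraph V W).dist (.inr w) (.inr w') = 2 := by
  inhabit V
  rw [SimpleGraph.dist, edist_eq_two_iff.mpr
    ⟨by simpa using h, by simp, ⟨.inl default, by simp [mem_commonNeighbors]⟩⟩]
  rfl

end SimpleGraph

open SimpleGraph

section Star

variable {W : Type*} [Fintype W] [DecidableEq W]

theorem RD_star : RD (completeBipartiteGraph (Fin 1) W) =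
    fromBlocks 0 (of 1) (of 1) ((2⁻¹ : ℝ) • (of 1 - 1)) := by
  ext (u | u) (v | v)
  · simp [RD, Subsingleton.elim u v]
  · simp [RD, completeBipartiteGraph_dist_inl_inr]
  · simp [RD, dist_comm, completeBipartiteGraph_dist_inl_inr]
  · by_cases h : u = v
    · simp [RD, h]
    · simp [RD, h, completeBipartiteGraph_dist_inr_inr]

theorem RDL_star : RDL (completeBipartiteGraph (Fin 1) W) =
    fromBlocks ((Fintype.card W : ℝ) • of 1) (-of 1) (-of 1)
      (scalar W (((Fintype.card W : ℝ) + 2) / 2) + (-2⁻¹ : ℝ) • of 1) := by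
  ext (u | u) (v | v)
  · simp [RDL, RTr, RD_star, Fintype.sum_sum_type, Subsingleton.elim u v]
  · simp [RDL, RD_star]
  · simp [RDL, RD_star]
  · by_cases h : u = v
    · simp [RDL, RTr, RD_star, h, Fintype.sum_sum_type, Finset.sum_sub_distrib,
        ← Finset.mul_sum, one_apply]
      ring
    · simp [RDL, RD_star, h]

theorem RDL_star_conj :
    fromBlocks 1 0 (-of 1) 1 * RDL (completeBipartiteGraph (Fin 1) W) * fromBlocks 1 0 (of 1) 1 =
      fromBlocks 0 (-of 1) 0 (scalar W (((Fintype.card W : ℝ) + 2) / 2) + (2⁻¹ : ℝ) • of 1) := by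
  rw [RDL_star, fromBlocks_multiply, fromBlocks_multiply]
  congr 1 <;> ext <;> simp [mul_apply, diagonal_apply, Finset.sum_add_distrib] <;> ring

theorem charpoly_RDL_star [Nonempty W] :
    (RDL (completeBipartiteGraph (Fin 1) W)).charpoly =
      X * ((X - C ((Fintype.card W : ℝ) + 1)) *
        (X - C (((Fintype.card W : ℝ) + 2) / 2)) ^ (Fintype.card W - 1)) := by
  have hPQ : (fromBlocks 1 0 (of 1) 1 : Matrix (Fin 1 ⊕ W) (Fin 1 ⊕ W) ℝ) *
      fromBlocks 1 0 (-of 1) 1 = 1 := by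
    simp [fromBlocks_multiply, ← fromBlocks_one]
  rw [← charpoly_mul_mul_eq_of_mul_eq_one hPQ, RDL_star_conj, charpoly_fromBlocks_zero₂₁,
    charpoly_zero, charpoly_scalar_add_smul_of_one, Fintype.card_fin, pow_one,
    show ((Fintype.card W : ℝ) + 2) / 2 + Fintype.card W * 2⁻¹ = Fintype.card W + 1 by ring]

end Star

theorem stmt13 (n : ℕ) (hn : 2 ≤ n) :
    (RDL (completeBipartiteGraph (Fin 1) (Fin (n - 1)))).charpoly.roots =
      0 ::ₘ (n : ℝ) ::ₘ Multiset.replicate (n - 2) (((n : ℝ) + 1) / 2) := by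
  have : NeZero (n - 1) := ⟨by omega⟩
  have hmonic : ((X - C ((n - 1 : ℕ) + 1 : ℝ)) *
      (X - C ((((n - 1 : ℕ) : ℝ) + 2) / 2)) ^ (n - 1 - 1)).Monic :=
    (monic_X_sub_C _).mul ((monic_X_sub_C _).pow _)
  rw [charpoly_RDL_star, Fintype.card_fin, roots_mul (monic_X.mul hmonic).ne_zero, roots_X,
    roots_mul hmonic.ne_zero, roots_X_sub_C, roots_pow, roots_X_sub_C, Multiset.nsmul_singleton,
    Multiset.singleton_add, Multiset.singleton_add, Nat.cast_pred (by omega : 0 < n),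
    sub_add_cancel, show n - 1 - 1 = n - 2 by omega,
    show ((n : ℝ) - 1 + 2) / 2 = (n + 1) / 2 by ring]
end

section
/- The reciprocal distance Laplacian spectrum of K_n − e (complete graph minus one edge, n ≥ 3) is {0, n−1, n^{(n−2)}}. -/
open Matrix Polynomial

section helpers

lemma sum_if1 {ι : Type*} [Fintype ι] [DecidableEq ι] (f : ι → ℝ) (a : ι) (x : ℝ) :
    ∑ k, f k * (if k = a then x else 0) = f a * x := by
  simp [mul_ite]

lemma sum_if1' {ι : Type*} [Fintype ι] [DecidableEq ι] (f : ι → ℝ) (a : ι) (x : ℝ) :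
    ∑ k, (if k = a then x else 0) * f k = x * f a := by
  simp [ite_mul]

lemma sum_if2 {ι : Type*} [Fintype ι] [DecidableEq ι] (f : ι → ℝ) (a b : ι) (hab : a ≠ b)
    (x y : ℝ) :
    ∑ k, f k * (if k = a then x else if k = b then y else 0) = f a * x + f b * y := by
  have h : ∀ k, f k * (if k = a then x else if k = b then y else 0)
      = f k * (if k = a then x else 0) + f k * (if k = b then y else 0) := by
    intro k
    by_cases h1 : k = a <;> by_cases h2 : k = b <;> simp_all
  simp only [h, Finset.sum_add_distrib, sum_if1]

lemma sum_if3 {ι : Type*} [Fintype ι] [DecidableEq ι] (a b : ι) (hab : a ≠ b) (x y z : ℝ) :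
    ∑ k : ι, (if k = a then x else if k = b then y else z)
      = x + y + ((Fintype.card ι : ℝ) - 2) * z := by
  have h : ∀ k : ι, (if k = a then x else if k = b then y else z)
      = z + ((if k = a then x - z else 0) + (if k = b then y - z else 0)) := by
    intro k
    by_cases h1 : k = a <;> by_cases h2 : k = b <;> simp_all
  simp only [h, Finset.sum_add_distrib, Finset.sum_const, Finset.sum_ite_eq',
    Finset.mem_univ, if_true, Finset.card_univ, nsmul_eq_mul]
  ring

lemma sum_if4 {ι : Type*} [Fintype ι] [DecidableEq ι] (a : ι) (x z : ℝ) :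
    ∑ k : ι, (if k = a then x else z) = x + ((Fintype.card ι : ℝ) - 1) * z := by
  have h : ∀ k : ι, (if k = a then x else z) = z + (if k = a then x - z else 0) := by
    intro k; by_cases h1 : k = a <;> simp_all
  simp only [h, Finset.sum_add_distrib, Finset.sum_const, Finset.sum_ite_eq',
    Finset.mem_univ, if_true, Finset.card_univ, nsmul_eq_mul]
  ring

lemma charpoly_conj {m : Type*} [Fintype m] [DecidableEq m] (M P Q : Matrix m m ℝ)
    (h : Q * P = 1) : (Q * M * P).charpoly = M.charpoly := by
  have hmap : ∀ A B : Matrix m m ℝ, (A * B).map (C : ℝ →+* ℝ[X])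
      = A.map C * B.map C := fun A B => by
    simpa using (RingHom.mapMatrix (C : ℝ →+* ℝ[X])).map_mul A B
  have key : charmatrix (Q * M * P) = Q.map C * charmatrix M * P.map C := by
    unfold charmatrix
    rw [mul_sub, sub_mul]
    congr 1
    · have hc : Q.map (C : ℝ →+* ℝ[X]) * Matrix.scalar m (X : ℝ[X]) =
          Matrix.scalar m (X : ℝ[X]) * Q.map C :=
        (Matrix.scalar_commute (X : ℝ[X]) (fun r' => Commute.all _ _) (Q.map C)).symm
      rw [hc, mul_assoc, ← hmap, h]
      simp
    · simp only [RingHom.mapMatrix_apply]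
      rw [hmap, hmap]
  rw [Matrix.charpoly, Matrix.charpoly, key, det_mul, det_mul]
  have h2 : (Q.map (C : ℝ →+* ℝ[X])).det * (P.map C).det = 1 := by
    rw [← det_mul, ← hmap, h]; simp
  calc (Q.map (C:ℝ→+*ℝ[X])).det * (charmatrix M).det * (P.map C).det
      = (charmatrix M).det * ((Q.map (C:ℝ→+*ℝ[X])).det * (P.map C).det) := by ring
    _ = (charmatrix M).det := by rw [h2, mul_one]

end helpers

lemma main_lemma {n : ℕ} (hn : 3 ≤ n) (v0 v1 : Fin n) (h0 : (v0 : ℕ) = 0)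
    (h1 : (v1 : ℕ) = 1) :
    (RDL ((⊤ : SimpleGraph (Fin n)).deleteEdges {s(v0, v1)})).charpoly.roots =
      0 ::ₘ ((n : ℝ) - 1) ::ₘ Multiset.replicate (n - 2) (n : ℝ) := by
  have hne : v0 ≠ v1 := by
    intro h; rw [h, h1] at h0; exact absurd h0 one_ne_zero
  have hn0 : (n : ℝ) ≠ 0 := Nat.cast_ne_zero.mpr (by omega)
  set G := (⊤ : SimpleGraph (Fin n)).deleteEdges {s(v0, v1)} with hG
  -- adjacency
  have hadj : ∀ u v : Fin n, G.Adj u v ↔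
      u ≠ v ∧ ¬((u = v0 ∧ v = v1) ∨ (u = v1 ∧ v = v0)) := by
    intro u v
    rw [hG, SimpleGraph.deleteEdges_adj]
    simp [SimpleGraph.top_adj, Sym2.eq_iff]
  -- a third vertex
  obtain ⟨w, hw0, hw1⟩ : ∃ w : Fin n, w ≠ v0 ∧ w ≠ v1 := by
    refine ⟨⟨2, by omega⟩, fun h => ?_, fun h => ?_⟩ <;>
    · rw [Fin.ext_iff] at h; simp at h; omega
  -- distances
  have hdist01 : G.dist v0 v1 = 2 := by
    have ha : G.Adj v0 w := (hadj _ _).mpr (by tauto)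
    have hb : G.Adj w v1 := (hadj _ _).mpr (by constructor <;> tauto)
    have hle : G.dist v0 v1 ≤ 2 := by
      have := SimpleGraph.dist_le (SimpleGraph.Walk.cons ha hb.toWalk)
      simpa using this
    have hne1 : G.dist v0 v1 ≠ 1 := by
      intro h
      have := SimpleGraph.dist_eq_one_iff_adj.mp h
      rw [hadj] at this
      tauto
    have hpos : 0 < G.dist v0 v1 :=
      SimpleGraph.Reachable.pos_dist_of_ne ⟨SimpleGraph.Walk.cons ha hb.toWalk⟩ hne
    omega
  have hRD : ∀ u v : Fin n, RD G u v =
      if u = v then 0 else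
        if (u = v0 ∧ v = v1) ∨ (u = v1 ∧ v = v0) then 1/2 else 1 := by
    intro u v
    by_cases huv : u = v
    · simp [RD, huv]
    rw [RD, if_neg huv, if_neg huv]
    by_cases hp : (u = v0 ∧ v = v1) ∨ (u = v1 ∧ v = v0)
    · rw [if_pos hp]
      rcases hp with ⟨hu, hv⟩ | ⟨hu, hv⟩
      · subst hu; subst hv; rw [hdist01]; norm_num
      · subst hu; subst hv; rw [SimpleGraph.dist_comm, hdist01]; norm_num
    · rw [if_neg hp]
      have : G.Adj u v := (hadj _ _).mpr ⟨huv, hp⟩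
      rw [SimpleGraph.dist_eq_one_iff_adj.mpr this]
      norm_num
  have hcard : (Fintype.card (Fin n) : ℝ) = n := by simp
  have hRTr : ∀ v : Fin n, RTr G v =
      if v = v0 ∨ v = v1 then (n:ℝ) - 3/2 else (n:ℝ) - 1 := by
    intro v
    by_cases hv0 : v = v0
    · rw [if_pos (Or.inl hv0)]
      rw [RTr]
      have h : ∀ u : Fin n, RD G v u = if u = v0 then 0 else if u = v1 then 1/2 else 1 := by
        intro u
        rw [hRD]
        by_cases hu0 : u = v0 <;> by_cases hu1 : u = v1 <;> simp_all <;> tauto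
      simp only [h]
      rw [sum_if3 v0 v1 hne 0 (1/2) 1, hcard]
      ring
    by_cases hv1 : v = v1
    · rw [if_pos (Or.inr hv1)]
      rw [RTr]
      have h : ∀ u : Fin n, RD G v u = if u = v1 then 0 else if u = v0 then 1/2 else 1 := by
        intro u
        rw [hRD]
        by_cases hu0 : u = v0 <;> by_cases hu1 : u = v1 <;> simp_all <;> tauto
      simp only [h]
      rw [sum_if3 v1 v0 hne.symm 0 (1/2) 1, hcard]
      ring
    · rw [if_neg (by tauto)]
      rw [RTr]
      have h : ∀ u : Fin n, RD G v u = if u = v then 0 else 1 := by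
        intro u
        rw [hRD]
        by_cases hu : u = v <;> simp_all <;> tauto
      simp only [h]
      rw [sum_if4 v 0 1, hcard]
      ring
  set M := RDL G with hMdef
  have hMapp : ∀ i j : Fin n, M i j = (if i = j then RTr G i else 0) - RD G i j := by
    intro i j
    rw [hMdef, RDL]
    simp [Matrix.sub_apply, Matrix.diagonal_apply]
  have hM' : ∀ i j : Fin n, M i j =
      if i = j then (if i = v0 ∨ i = v1 then (n:ℝ) - 3/2 else (n:ℝ) - 1)
      else (if (i = v0 ∧ j = v1) ∨ (i = v1 ∧ j = v0) then -(1/2) else -1) := by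
    intro i j
    rw [hMapp, hRTr, hRD]
    by_cases hij : i = j
    · simp [hij]
    · rw [if_neg hij, if_neg hij, if_neg hij]
      split_ifs <;> ring
  set P : Matrix (Fin n) (Fin n) ℝ := Matrix.of fun i j =>
    if j = v0 then 1
    else if j = v1 then (if i = v0 then 1 else if i = v1 then -1 else 0)
    else (if i = j then 1 else if i = v0 then -1 else 0) with hP
  have hPapp : ∀ i j : Fin n, P i j =
      if j = v0 then 1
      else if j = v1 then (if i = v0 then 1 else if i = v1 then -1 else 0)
      else (if i = j then 1 else if i = v0 then -1 else 0) := fun i j => by rw [hP]; rfl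
  set Q : Matrix (Fin n) (Fin n) ℝ := Matrix.of fun i j =>
    if i = v0 then (n:ℝ)⁻¹
    else if i = v1 then (n:ℝ)⁻¹ - (if j = v1 then 1 else 0)
    else (if j = i then 1 else 0) - (n:ℝ)⁻¹ with hQ
  have hQapp : ∀ i j : Fin n, Q i j =
      if i = v0 then (n:ℝ)⁻¹
      else if i = v1 then (n:ℝ)⁻¹ - (if j = v1 then 1 else 0)
      else (if j = i then 1 else 0) - (n:ℝ)⁻¹ := fun i j => by rw [hQ]; rfl
  set N : Matrix (Fin n) (Fin n) ℝ := Matrix.of fun i j =>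
    if j = v0 then 0
    else if j = v1 then (if i = v1 then (n:ℝ) - 1 else 0)
    else (if i = j then (n:ℝ) else if i = v1 then 1/2 else 0) with hN
  have hNapp : ∀ i j : Fin n, N i j =
      if j = v0 then 0
      else if j = v1 then (if i = v1 then (n:ℝ) - 1 else 0)
      else (if i = j then (n:ℝ) else if i = v1 then 1/2 else 0) := fun i j => by rw [hN]; rfl
  -- column sums of P
  have hcolP : ∀ j : Fin n, (∑ k, P k j) = if j = v0 then (n:ℝ) else 0 := by
    intro j
    by_cases hj0 : j = v0
    · rw [if_pos hj0]
      have h : ∀ k : Fin n, P k j = 1 := fun k => by simp [hPapp, hj0]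
      simp only [h, Finset.sum_const, Finset.card_univ, Fintype.card_fin, nsmul_eq_mul, mul_one]
    by_cases hj1 : j = v1
    · rw [if_neg hj0]
      have h : ∀ k : Fin n, P k j = if k = v0 then 1 else if k = v1 then -1 else 0 :=
        fun k => by simp [hPapp, hj0, hj1, Ne.symm hne]
      simp only [h]
      rw [sum_if3 v0 v1 hne 1 (-1) 0]
      ring
    · rw [if_neg hj0]
      have h : ∀ k : Fin n, P k j = if k = j then 1 else if k = v0 then -1 else 0 :=
        fun k => by simp [hPapp, hj0, hj1]
      simp only [h]
      rw [sum_if3 j v0 hj0 1 (-1) 0]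
      ring
  -- row sums of M are zero
  have hrowM : ∀ i : Fin n, (∑ k, M i k) = 0 := by
    intro i
    simp only [hMapp, Finset.sum_sub_distrib]
    rw [Finset.sum_ite_eq]
    simp [RTr]
  -- Q * P = 1
  have hQP : Q * P = 1 := by
    ext i j
    rw [Matrix.mul_apply, Matrix.one_apply]
    by_cases hi0 : i = v0
    · have hq : ∀ k : Fin n, Q i k = (n:ℝ)⁻¹ := fun k => by simp [hQapp, hi0]
      simp only [hq]
      rw [← Finset.mul_sum, hcolP]
      by_cases hj0 : j = v0
      · rw [if_pos hj0, if_pos (by rw [hi0, hj0])]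
        exact inv_mul_cancel₀ hn0
      · rw [if_neg hj0, if_neg (fun h => hj0 (by rw [← h, hi0]))]
        ring
    by_cases hi1 : i = v1
    · have hq : ∀ k : Fin n, Q i k = (n:ℝ)⁻¹ - (if k = v1 then 1 else 0) :=
        fun k => by simp [hQapp, hi0, hi1, Ne.symm hne]
      have e1 : (∑ k, Q i k * P k j) = (n:ℝ)⁻¹ * (∑ k, P k j) - 1 * P v1 j := by
        simp only [hq, sub_mul, Finset.sum_sub_distrib, ← Finset.mul_sum, sum_if1']
      rw [e1, hcolP]
      by_cases hj0 : j = v0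
      · rw [if_pos hj0, inv_mul_cancel₀ hn0,
          if_neg (fun h => hne (by rw [← hi1, h, hj0]))]
        have : P v1 j = 1 := by simp [hPapp, hj0]
        rw [this]; ring
      by_cases hj1 : j = v1
      · rw [if_neg hj0, if_pos (by rw [hi1, hj1])]
        have : P v1 j = -1 := by simp [hPapp, hj0, hj1, Ne.symm hne]
        rw [this]; ring
      · rw [if_neg hj0, if_neg (fun h => hj1 (by rw [← h, hi1]))]
        have : P v1 j = 0 := by simp [hPapp, hj0, hj1, Ne.symm hne, Ne.symm hj1]
        rw [this]; ring
    · have hq : ∀ k : Fin n, Q i k = (if k = i then 1 else 0) - (n:ℝ)⁻¹ :=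
        fun k => by simp [hQapp, hi0, hi1]
      have e1 : (∑ k, Q i k * P k j) = 1 * P i j - (n:ℝ)⁻¹ * (∑ k, P k j) := by
        simp only [hq, sub_mul, Finset.sum_sub_distrib, ← Finset.mul_sum, sum_if1']
      rw [e1, hcolP]
      by_cases hj0 : j = v0
      · rw [if_pos hj0, inv_mul_cancel₀ hn0, if_neg (fun h => hi0 (by rw [h, hj0]))]
        have : P i j = 1 := by simp [hPapp, hj0]
        rw [this]; ring
      by_cases hj1 : j = v1
      · rw [if_neg hj0, if_neg (fun h => hi1 (by rw [h, hj1]))]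
        have : P i j = 0 := by simp [hPapp, hj0, hj1, hi0, hi1, Ne.symm hne]
        rw [this]; ring
      · rw [if_neg hj0]
        have : P i j = if i = j then 1 else 0 := by simp [hPapp, hj0, hj1, hi0]
        rw [this]
        by_cases hij : i = j
        · rw [if_pos hij]; ring
        · rw [if_neg hij]; ring
  -- M * P = P * N
  have hMP : M * P = P * N := by
    ext i j
    rw [Matrix.mul_apply, Matrix.mul_apply]
    by_cases hj0 : j = v0
    · have hp : ∀ k : Fin n, P k j = 1 := fun k => by simp [hPapp, hj0]
      have hnn : ∀ k : Fin n, N k j = 0 := fun k => by simp [hNapp, hj0]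
      simp only [hp, hnn, mul_one, mul_zero, Finset.sum_const_zero]
      exact hrowM i
    by_cases hj1 : j = v1
    · have hp : ∀ k : Fin n, P k j = if k = v0 then 1 else if k = v1 then -1 else 0 :=
        fun k => by simp [hPapp, hj0, hj1, Ne.symm hne]
      have hnn : ∀ k : Fin n, N k j = if k = v1 then (n:ℝ) - 1 else 0 :=
        fun k => by simp [hNapp, hj0, hj1, Ne.symm hne]
      simp only [hp, hnn]
      rw [sum_if2 (fun k => M i k) v0 v1 hne 1 (-1), sum_if1 (fun k => P i k) v1 ((n:ℝ)-1)]
      by_cases hi0 : i = v0 <;> by_cases hi1 : i = v1 <;>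
        simp [hM', hPapp, hi0, hi1, hj0, hj1, hne, Ne.symm hne, Ne.symm hj0] <;> ring
    · have hp : ∀ k : Fin n, P k j = if k = j then 1 else if k = v0 then -1 else 0 :=
        fun k => by simp [hPapp, hj0, hj1]
      have hnn : ∀ k : Fin n, N k j = if k = j then (n:ℝ) else if k = v1 then 1/2 else 0 :=
        fun k => by simp [hNapp, hj0, hj1]
      simp only [hp, hnn]
      rw [sum_if2 (fun k => M i k) j v0 hj0 1 (-1),
        sum_if2 (fun k => P i k) j v1 hj1 (n:ℝ) (1/2)]
      by_cases hi0 : i = v0 <;> by_cases hi1 : i = v1 <;> by_cases hij : i = j <;>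
        simp [hM', hPapp, hi0, hi1, hij, hj0, hj1, hne, Ne.symm hne, Ne.symm hj0, Ne.symm hj1] <;> ring
  -- conjugation
  have hNQMP : N = Q * M * P := by
    calc N = 1 * N := (one_mul N).symm
      _ = (Q * P) * N := by rw [hQP]
      _ = Q * (P * N) := by rw [mul_assoc]
      _ = Q * (M * P) := by rw [hMP]
      _ = Q * M * P := by rw [mul_assoc]
  have hcp : M.charpoly = N.charpoly := by
    rw [hNQMP]; exact (charpoly_conj M P Q hQP).symm
  -- N is upper triangular
  have htri : N.BlockTriangular id := by
    intro i j hij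
    have hij' : (j:ℕ) < (i:ℕ) := hij
    by_cases hj0 : j = v0
    · simp [hNapp, hj0]
    by_cases hj1 : j = v1
    · have hiv1 : i ≠ v1 := by
        intro h; rw [h, ← hj1] at hij'; omega
      simp [hNapp, hj0, hj1, hiv1]
    · have hijne : i ≠ j := by intro h; rw [h] at hij'; omega
      have hiv1 : i ≠ v1 := by
        intro h
        apply hj0
        have hlt : (j:ℕ) < 1 := by rw [h, h1] at hij'; exact hij'
        exact Fin.ext (by omega)
      simp [hNapp, hj0, hj1, hijne, hiv1]
  set d : Fin n → ℝ := fun i => if i = v0 then 0 else if i = v1 then (n:ℝ) - 1 else n with hd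
  have hdiag : ∀ i : Fin n, N i i = d i := by
    intro i
    by_cases hi0 : i = v0 <;> by_cases hi1 : i = v1 <;>
      simp [hNapp, hd, hi0, hi1, hne, Ne.symm hne]
  have hcpN : N.charpoly = ∏ i : Fin n, (X - C (d i)) := by
    rw [Matrix.charpoly_of_upperTriangular N htri]
    exact Finset.prod_congr rfl fun i _ => by rw [hdiag]
  have hroots : M.charpoly.roots = (Finset.univ.val.map d) := by
    rw [hcp, hcpN]
    have heq : (∏ i : Fin n, (X - C (d i)))
        = ((Finset.univ.val.map d).map (fun a => X - C a)).prod := by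
      rw [Multiset.map_map]
      rfl
    rw [heq, Polynomial.roots_multiset_prod_X_sub_C]
  rw [hroots]
  -- final multiset computation
  have hv1mem : v1 ∈ Finset.univ.erase v0 :=
    Finset.mem_erase.mpr ⟨Ne.symm hne, Finset.mem_univ _⟩
  have huniv : (Finset.univ : Finset (Fin n)).val
      = v0 ::ₘ v1 ::ₘ ((Finset.univ.erase v0).erase v1).val := by
    rw [Finset.erase_val, Finset.erase_val]
    rw [Multiset.cons_erase (show v1 ∈ (Finset.univ : Finset (Fin n)).val.erase v0 from by
        rw [← Finset.erase_val]; exact hv1mem),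
      Multiset.cons_erase (show v0 ∈ (Finset.univ : Finset (Fin n)).val from
        Finset.mem_univ v0)]
  have hd0 : d v0 = 0 := by simp [hd]
  have hd1 : d v1 = (n:ℝ) - 1 := by simp [hd, Ne.symm hne]
  have hrest : ∀ x ∈ ((Finset.univ.erase v0).erase v1).val, d x = (n:ℝ) := by
    intro x hx
    have hx' : x ∈ (Finset.univ.erase v0).erase v1 := hx
    have h1' := Finset.mem_erase.mp hx'
    have h2' := Finset.mem_erase.mp h1'.2
    simp [hd, h1'.1, h2'.1]
  have hcardrest : ((Finset.univ.erase v0).erase v1).card = n - 2 := by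
    rw [Finset.card_erase_of_mem hv1mem, Finset.card_erase_of_mem (Finset.mem_univ v0)]
    rw [Finset.card_univ, Fintype.card_fin]
    omega
  have hmaprest : (((Finset.univ.erase v0).erase v1).val.map d)
      = Multiset.replicate (n - 2) (n:ℝ) := by
    rw [Multiset.map_congr rfl hrest, Multiset.map_const']
    rw [show Multiset.card ((Finset.univ.erase v0).erase v1).val
      = ((Finset.univ.erase v0).erase v1).card from rfl, hcardrest]
  rw [huniv, Multiset.map_cons, Multiset.map_cons, hd0, hd1, hmaprest]

theorem stmt15 (n : ℕ) (hn : 3 ≤ n) :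
    (RDL ((⊤ : SimpleGraph (Fin n)).deleteEdges
        {s((⟨0, by omega⟩ : Fin n), (⟨1, by omega⟩ : Fin n))})).charpoly.roots =
      0 ::ₘ ((n : ℝ) - 1) ::ₘ Multiset.replicate (n - 2) (n : ℝ) := by
  exact main_lemma hn _ _ rfl rfl
end
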